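/- arXiv:2405.02049 — 5 statements merged into one kernel-verified Lean document; each statement's English description precedes it below -/
import Mathlib

section
/- Let H be a hypertree in which every hyperedge has size at most k (where k ≥ 2). Then H can be shrunk to a tree T on the same vertex set such that for every vertex v of H, the degree of v in T satisfies d_T(v) ≥ d_H(v)/(2k). -/
/-!
A hyperedge `e` with `|e| ≥ 3` has a vertex whose deletion keeps the hypertree condition.
Otherwise every `u ∈ e` has a tight set `X` (one with `|X| - 1` hyperedges inside) that contains
`e - u` but not `u`; two of them meet in `e - {u, w}` and cover `e`, and uncrossing them violates
the condition. Deleting vertices until all hyperedges are pairs thus gives a shrinking, and it is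
connected because no cut of a hypertree is avoided by all hyperedges. A connected graph on `V`
has at least `|V| - 1 = |E|` edges, so a connected shrinking is injective, loopless and a tree.

Among connected shrinkings take one maximising `∑ᵤ min (d_T u) ⌈d_H u / 2k⌉`, and suppose `v` is
deficient, i.e. `2k d_T(v) < d_H(v)`. For a deficient `t` and a hyperedge `e ∋ t` shrunk to a pair
`ab ∌ t`, with `t` on `a`'s side of `T - ab`, replacing `ab` by `tb` keeps a tree and gains one
at `t`; by maximality `a` becomes deficient, so such swaps cascade. Let `S` be the set of
vertices they reach from `v`. Every hyperedge at `u ∈ S` not routed through `u` has an original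
pair meeting `S`. There are at most `∑_{u ∈ S} d_T(u)` such hyperedges, each with at most `k`
vertices, and counting them against the deficiency of all of `S` forces `k ≤ 0`.
-/

open Finset SimpleGraph Function

section

variable {V ι : Type*}

namespace SimpleGraph

variable {G G' : SimpleGraph V}

theorem Reachable.of_forall_adj (h : ∀ x y, G.Adj x y → G'.Reachable x y) {x y : V}
    (hxy : G.Reachable x y) : G'.Reachable x y := by
  rw [reachable_iff_reflTransGen] at hxy
  induction hxy using Relation.ReflTransGen.head_induction_on with
  | refl => rfl
  | head hadj _ ih => exact (h _ _ hadj).trans ih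

theorem Reachable.deleteEdges_or {x a : V} (h : G.Reachable x a) (b : V) :
    (G.deleteEdges {s(a, b)}).Reachable x a ∨ (G.deleteEdges {s(a, b)}).Reachable x b := by
  rw [reachable_iff_reflTransGen] at h
  induction h using Relation.ReflTransGen.head_induction_on with
  | refl => exact .inl .rfl
  | @head x z hadj _ ih =>
    by_cases hxz : s(x, z) = s(a, b)
    · rcases Sym2.eq_iff.1 hxz with ⟨rfl, -⟩ | ⟨rfl, -⟩
      exacts [.inl .rfl, .inr .rfl]
    · have hadj' : (G.deleteEdges {s(a, b)}).Adj x z := by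
        rw [deleteEdges_adj]
        exact ⟨hadj, hxz⟩
      exact ih.imp hadj'.reachable.trans hadj'.reachable.trans

end SimpleGraph

theorem Finset.card_filter_update_add [Fintype ι] [DecidableEq ι] {α : Type*} (f : ι → α)
    (i : ι) (a : α) (P : α → Prop) [DecidablePred P] :
    #{j | P (update f i a j)} + (if P (f i) then 1 else 0) =
      #{j | P (f j)} + (if P a then 1 else 0) := by
  simp only [card_filter, ← add_sum_erase _ _ (mem_univ i), update_self]
  rw [sum_congr rfl fun j hj => by rw [update_of_ne (ne_of_mem_erase hj)]]
  ring

theorem Finset.card_filter_univ_coe {α : Type*} (E : Finset α) (P : α → Prop)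
    [DecidablePred P] : #{i : E | P i} = #(E.filter P) := by
  rw [univ_eq_attach, filter_attach, card_map, card_attach]

theorem Finset.card_filter_subset_add_card_filter_subset_lt [Fintype ι] [DecidableEq ι]
    [DecidableEq V] (H : ι → Finset V) {i : ι} {X Y : Finset V} (hXY : H i ⊆ X ∪ Y)
    (hX : ¬H i ⊆ X) (hY : ¬H i ⊆ Y) :
    #{j | H j ⊆ X} + #{j | H j ⊆ Y} < #{j | H j ⊆ X ∪ Y} + #{j | H j ⊆ X ∩ Y} := by
  have hinter : ({j | H j ⊆ X} : Finset ι) ∩ ({j | H j ⊆ Y} : Finset ι) =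
      ({j | H j ⊆ X ∩ Y} : Finset ι) := by
    ext j
    simp [subset_inter_iff]
  have hunion : ({j | H j ⊆ X} : Finset ι) ∪ ({j | H j ⊆ Y} : Finset ι) ⊂
      ({j | H j ⊆ X ∪ Y} : Finset ι) := by
    refine (ssubset_iff_of_subset fun j => ?_).2 ⟨i, by simpa using hXY, by simp [hX, hY]⟩
    simp only [mem_union, mem_filter_univ]
    rintro (h | h)
    exacts [h.trans subset_union_left, h.trans subset_union_right]
  rw [← card_union_add_card_inter, hinter]
  exact Nat.add_lt_add_right (card_lt_card hunion) _

theorem Finset.sum_card_filter_le_mul_sum_card [DecidableEq V] [Fintype ι] [DecidableEq ι]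
    {H : ι → Finset V} {k : ℕ} (hrank : ∀ i, #(H i) ≤ k) (p : ι → Sym2 V) {S : Finset V}
    {R : V → ι → Prop} [∀ u, DecidablePred (R u)]
    (hR : ∀ u ∈ S, ∀ i, R u i → u ∈ H i ∧ ∃ x ∈ S, x ∈ p i) :
    ∑ u ∈ S, #{i | R u i} ≤ k * ∑ u ∈ S, #{i | u ∈ p i} := by
  set I := S.biUnion fun u => ({i | u ∈ p i} : Finset ι)
  calc ∑ u ∈ S, #{i | R u i}
      ≤ ∑ u ∈ S, #{i ∈ I | u ∈ H i} := sum_le_sum fun u hu => card_le_card fun i hi => by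
        obtain ⟨huH, x, hx, hxp⟩ := hR u hu i ((mem_filter_univ _).1 hi)
        simpa [I, huH] using ⟨x, hx, hxp⟩
    _ = ∑ i ∈ I, #{u ∈ S | u ∈ H i} := by simp only [card_filter]; exact sum_comm
    _ ≤ ∑ _i ∈ I, k := sum_le_sum fun i _ =>
        (card_le_card fun u hu => (mem_filter.1 hu).2).trans (hrank i)
    _ = k * #I := by rw [sum_const, smul_eq_mul, mul_comm]
    _ ≤ k * ∑ u ∈ S, #{i | u ∈ p i} := Nat.mul_le_mul_left k card_biUnion_le

theorem Fintype.sum_min_transfer {α : Type*} [Fintype α] [DecidableEq α] {f g τ : α → ℕ}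
    {t a : α} (hta : t ≠ a)
    (hg : ∀ u, (g u : ℤ) = f u + (if u = t then 1 else 0) - (if u = a then 1 else 0))
    (ht : f t < τ t) (hle : ∑ u, min (g u) (τ u) ≤ ∑ u, min (f u) (τ u)) :
    g a < τ a ∧ ∑ u, min (g u) (τ u) = ∑ u, min (f u) (τ u) := by
  have hdiff : ((∑ u, min (g u) (τ u) : ℕ) : ℤ) - ∑ u, min (f u) (τ u) =
      ((min (g t) (τ t) : ℕ) - min (f t) (τ t) : ℤ) +
        ((min (g a) (τ a) : ℕ) - min (f a) (τ a)) := by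
    push_cast
    rw [← sum_sub_distrib]
    refine Fintype.sum_eq_add t a hta fun u ⟨hut, hua⟩ => ?_
    have hgu := hg u
    simp only [hut, hua, if_false] at hgu
    omega
  have hgt := hg t
  have hga := hg a
  simp only [hta, hta.symm, if_true, if_false] at hgt hga
  omega

section Hypertree

variable [Fintype V] [DecidableEq V] [Fintype ι]

/-- Hyperedges form an indexed family rather than a set: deleting a vertex from a hyperedge can
produce a copy of another one. -/
structure IsHypertree (H : ι → Finset V) : Prop where
  card_filter_subset_lt : ∀ X : Finset V, X.Nonempty → #{i | H i ⊆ X} < #X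
  card_add_one : Fintype.card ι + 1 = Fintype.card V

namespace IsHypertree

variable {H : ι → Finset V}

theorem two_le_card (hH : IsHypertree H) (i : ι) : 2 ≤ #(H i) := by
  have : Nonempty V := Fintype.card_pos_iff.1 (by have := hH.card_add_one; omega)
  by_contra! h
  obtain ⟨x, hx⟩ := card_le_one_iff_subset_singleton.1 (Nat.le_of_lt_succ h)
  have hx' := hH.card_filter_subset_lt {x} (singleton_nonempty x)
  rw [card_singleton, Nat.lt_one_iff, card_eq_zero, filter_eq_empty_iff] at hx'
  exact hx' (mem_univ i) hx

theorem of_finset [Nonempty V] {E : Finset (Finset V)}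
    (hsub : ∀ X : Finset V, #(E.filter (· ⊆ X)) ≤ #X - 1) (hfull : #E = Fintype.card V - 1) :
    IsHypertree (Subtype.val : E → Finset V) := by
  refine ⟨fun X hX => ?_, ?_⟩
  · rw [card_filter_univ_coe E (· ⊆ X)]
    have := hsub X
    have := hX.card_pos
    omega
  · have := Fintype.card_pos (α := V)
    rw [Fintype.card_coe]
    omega

theorem eq_univ_of_forall_subset_or_subset_compl (hH : IsHypertree H) {X : Finset V}
    (hX : X.Nonempty) (h : ∀ i, H i ⊆ X ∨ H i ⊆ Xᶜ) : X = univ := by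
  by_contra hne
  obtain ⟨y, hy⟩ := not_forall.1 (mt eq_univ_iff_forall.2 hne)
  have hcover : Fintype.card ι ≤ #{i | H i ⊆ X} + #{i | H i ⊆ Xᶜ} := by
    classical
    calc Fintype.card ι = #({i | H i ⊆ X ∨ H i ⊆ Xᶜ} : Finset ι) := by
          rw [filter_true_of_mem fun i _ => h i, card_univ]
      _ ≤ _ := by rw [filter_or]; exact card_union_le _ _
  have hXlt := hH.card_filter_subset_lt X hX
  have hXclt := hH.card_filter_subset_lt Xᶜ ⟨y, mem_compl.2 hy⟩
  have hsplit := card_add_card_compl X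
  have hcard := hH.card_add_one
  omega

theorem exists_tight_of_not_isHypertree_update [DecidableEq ι] (hH : IsHypertree H) {i : ι}
    {v : V} (hv : v ∈ H i) (hnot : ¬IsHypertree (update H i ((H i).erase v))) :
    ∃ X, (H i).erase v ⊆ X ∧ v ∉ X ∧ #{j | H j ⊆ X} + 1 = #X := by
  obtain ⟨X, hXne, hX⟩ : ∃ X : Finset V, X.Nonempty ∧
      #X ≤ #{j | update H i ((H i).erase v) j ⊆ X} := by
    by_contra! h
    exact hnot ⟨h, hH.card_add_one⟩
  have hupd := card_filter_update_add H i ((H i).erase v) (· ⊆ X)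
  have hlt := hH.card_filter_subset_lt X hXne
  have herase : (H i).erase v ⊆ X := by
    by_contra h
    simp only [h, if_false] at hupd
    split_ifs at hupd <;> omega
  have hvX : v ∉ X := fun hvX => by
    have : H i ⊆ X := by rw [← insert_erase hv]; exact insert_subset hvX herase
    simp only [this, herase, if_true] at hupd
    omega
  have : ¬H i ⊆ X := fun h => hvX (h hv)
  simp only [this, herase, if_true, if_false] at hupd
  exact ⟨X, herase, hvX, by omega⟩

theorem exists_isHypertree_update_erase [DecidableEq ι] (hH : IsHypertree H) {i : ι}
    (hi : 3 ≤ #(H i)) : ∃ v ∈ H i, IsHypertree (update H i ((H i).erase v)) := by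
  by_contra! hnot
  choose X hXsub hvX htight using fun v (hv : v ∈ H i) =>
    hH.exists_tight_of_not_isHypertree_update hv (hnot v hv)
  obtain ⟨u, hu, w, hw, huw⟩ := one_lt_card.1 (by omega : 1 < #(H i))
  obtain ⟨x, hx⟩ : (((H i).erase u).erase w).Nonempty := by
    rw [← card_pos, card_erase_of_mem (mem_erase.2 ⟨huw.symm, hw⟩), card_erase_of_mem hu]
    omega
  have hcover : H i ⊆ X u hu ∪ X w hw := fun y hy => by
    by_cases hyu : y = u
    · exact mem_union_right _ (hXsub w hw (mem_erase.2 ⟨hyu ▸ huw, hy⟩))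
    · exact mem_union_left _ (hXsub u hu (mem_erase.2 ⟨hyu, hy⟩))
  have hinter : x ∈ X u hu ∩ X w hw :=
    mem_inter.2 ⟨hXsub u hu (mem_of_mem_erase hx),
      hXsub w hw (erase_subset_erase w (erase_subset u _) hx)⟩
  have hcross := card_filter_subset_add_card_filter_subset_lt H hcover
    (fun h => hvX u hu (h hu)) (fun h => hvX w hw (h hw))
  have hunion_lt := hH.card_filter_subset_lt (X u hu ∪ X w hw)
    ⟨x, mem_union_left _ (mem_inter.1 hinter).1⟩
  have hinter_lt := hH.card_filter_subset_lt _ ⟨x, hinter⟩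
  have hsum := card_union_add_card_inter (X u hu) (X w hw)
  have htight_u := htight u hu
  have htight_w := htight w hw
  omega

end IsHypertree

end Hypertree

/-- Only connectivity is asked for: when `|ι| + 1 = |V|`, injectivity, looplessness and
acyclicity follow by counting edges (`IsConnectedShrinking.edgeSet_eq_range_and_injective`). -/
structure IsConnectedShrinking (H : ι → Finset V) (p : ι → Sym2 V) : Prop where
  mem : ∀ i, ∀ x ∈ p i, x ∈ H i
  connected : (fromEdgeSet (Set.range p)).Connected

namespace IsConnectedShrinking

variable {H H' : ι → Finset V} {p : ι → Sym2 V}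

theorem mono (hp : IsConnectedShrinking H p) (h : ∀ i, H i ⊆ H' i) :
    IsConnectedShrinking H' p :=
  ⟨fun i x hx => h i (hp.mem i x hx), hp.connected⟩

theorem update_swap [DecidableEq ι] (hp : IsConnectedShrinking H p) {i : ι} {t a b : V}
    (ht : t ∈ H i) (hab : p i = s(a, b)) (htb : t ≠ b)
    (hreach : ((fromEdgeSet (Set.range p)).deleteEdges {s(a, b)}).Reachable t a) :
    IsConnectedShrinking H (update p i s(t, b)) := by
  set G' := fromEdgeSet (Set.range (update p i s(t, b)))
  have hle : (fromEdgeSet (Set.range p)).deleteEdges {s(a, b)} ≤ G' := by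
    intro x y hxy
    rw [deleteEdges_adj, fromEdgeSet_adj] at hxy
    obtain ⟨⟨⟨j, hj⟩, hxy⟩, hne⟩ := hxy
    have hji : j ≠ i := by rintro rfl; exact hne (by rw [← hj, hab]; rfl)
    exact (fromEdgeSet_adj _).2 ⟨⟨j, by rw [update_of_ne hji, hj]⟩, hxy⟩
  have htb' : G'.Adj t b := (fromEdgeSet_adj _).2 ⟨⟨i, update_self ..⟩, htb⟩
  have hab' : G'.Reachable a b := (hreach.mono hle).symm.trans htb'.reachable
  have := hp.connected.nonempty
  refine ⟨fun j x hx => ?_, (connected_iff _).2 ⟨fun x y => ?_, inferInstance⟩⟩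
  · rcases eq_or_ne j i with rfl | hji
    · rw [update_self, Sym2.mem_iff] at hx
      rcases hx with rfl | rfl
      · exact ht
      · exact hp.mem j x (by rw [hab]; exact Sym2.mem_mk_right a x)
    · rw [update_of_ne hji] at hx
      exact hp.mem j x hx
  · refine (hp.connected.preconnected x y).of_forall_adj fun x y hxy => ?_
    by_cases h : s(x, y) = s(a, b)
    · rcases Sym2.eq_iff.1 h with ⟨rfl, rfl⟩ | ⟨rfl, rfl⟩
      exacts [hab', hab'.symm]
    · exact (hle (by rw [deleteEdges_adj]; exact ⟨hxy, h⟩)).reachable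

theorem exists_mem [Nontrivial V] (hp : IsConnectedShrinking H p) (u : V) : ∃ j, u ∈ p j := by
  obtain ⟨z, hz⟩ := hp.connected.preconnected.exists_adj_of_nontrivial u
  obtain ⟨⟨j, hj⟩, -⟩ := (fromEdgeSet_adj _).1 hz
  exact ⟨j, hj ▸ Sym2.mem_mk_left u z⟩

variable [Fintype V] [Fintype ι]

theorem edgeSet_eq_range_and_injective (hp : IsConnectedShrinking H p)
    (hcard : Fintype.card ι + 1 = Fintype.card V) :
    (fromEdgeSet (Set.range p)).edgeSet = Set.range p ∧ Injective p := by
  classical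
  have hconn := hp.connected.card_vert_le_card_edgeSet_add_one
  rw [Nat.card_eq_fintype_card, ← hcard, Nat.card_coe_set_eq, edgeSet_fromEdgeSet] at hconn
  have himage : (Set.range p).ncard = #(univ.image p) := by
    rw [← Set.image_univ, ← coe_univ, ← coe_image, Set.ncard_coe_finset]
  have hle : #(univ.image p) ≤ Fintype.card ι := card_image_le.trans_eq card_univ
  have hdiff := Set.ncard_le_ncard (Set.sdiff_subset (s := Set.range p) (t := Sym2.diagSet))
  rw [edgeSet_fromEdgeSet]
  refine ⟨Set.eq_of_subset_of_ncard_le Set.sdiff_subset (by omega), ?_⟩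
  rw [← Set.injOn_univ, ← coe_univ, ← card_image_iff, card_univ]
  omega

theorem isTree (hp : IsConnectedShrinking H p) (hcard : Fintype.card ι + 1 = Fintype.card V) :
    (fromEdgeSet (Set.range p)).IsTree := by
  obtain ⟨hE, hinj⟩ := hp.edgeSet_eq_range_and_injective hcard
  rw [isTree_iff_connected_and_card, hE, Nat.card_coe_set_eq, Set.ncard_range_of_injective hinj,
    Nat.card_eq_fintype_card, Nat.card_eq_fintype_card, hcard]
  exact ⟨hp.connected, rfl⟩

theorem not_isDiag (hp : IsConnectedShrinking H p) (hcard : Fintype.card ι + 1 = Fintype.card V)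
    (i : ι) : ¬(p i).IsDiag :=
  not_isDiag_of_mem_edgeSet _ <|
    (hp.edgeSet_eq_range_and_injective hcard).1 ▸ Set.mem_range_self i

theorem ncard_neighborSet [DecidableEq V] (hp : IsConnectedShrinking H p)
    (hcard : Fintype.card ι + 1 = Fintype.card V) (u : V) :
    ((fromEdgeSet (Set.range p)).neighborSet u).ncard = #{i | u ∈ p i} := by
  obtain ⟨hE, hinj⟩ := hp.edgeSet_eq_range_and_injective hcard
  have hinc : (fromEdgeSet (Set.range p)).incidenceSet u =
      p '' ↑({i | u ∈ p i} : Finset ι) := by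
    ext e
    simp only [incidenceSet, hE, Set.mem_ofPred_eq, Set.mem_range, coe_filter_univ,
      Set.mem_image]
    constructor
    · rintro ⟨⟨j, rfl⟩, hu⟩
      exact ⟨j, hu, rfl⟩
    · rintro ⟨j, hu, rfl⟩
      exact ⟨⟨j, rfl⟩, hu⟩
  rw [← Nat.card_coe_set_eq, ← Nat.card_congr (incidenceSetEquivNeighborSet _ u),
    Nat.card_coe_set_eq, hinc, Set.ncard_image_of_injective _ hinj, Set.ncard_coe_finset]

end IsConnectedShrinking

namespace IsHypertree

variable [Fintype V] [DecidableEq V] [Fintype ι] {H : ι → Finset V}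

theorem exists_isConnectedShrinking_of_card_eq_two (hH : IsHypertree H)
    (h2 : ∀ i, #(H i) = 2) : ∃ p, IsConnectedShrinking H p := by
  choose x y hxy hHxy using fun i => card_eq_two.1 (h2 i)
  refine ⟨fun i => s(x i, y i), fun i z hz => ?_, ?_⟩
  · rw [hHxy i]
    rcases Sym2.mem_iff.1 hz with rfl | rfl <;> simp
  set G := fromEdgeSet (Set.range fun i => s(x i, y i))
  obtain ⟨v₀⟩ : Nonempty V := Fintype.card_pos_iff.1 (by have := hH.card_add_one; omega)
  have hadj (i : ι) : G.Adj (x i) (y i) := (fromEdgeSet_adj _).2 ⟨⟨i, rfl⟩, hxy i⟩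
  have hcomp : ({u | G.Reachable v₀ u} : Finset V) = univ := by
    refine hH.eq_univ_of_forall_subset_or_subset_compl ⟨v₀, by simp⟩ fun i => ?_
    rw [hHxy i]
    by_cases h : G.Reachable v₀ (x i)
    · left
      simp [insert_subset_iff, h, h.trans (hadj i).reachable]
    · right
      have : ¬G.Reachable v₀ (y i) := fun h' => h (h'.trans (hadj i).symm.reachable)
      simp [insert_subset_iff, h, this]
  refine (connected_iff_exists_forall_reachable _).2 ⟨v₀, fun w => ?_⟩
  simpa using (eq_univ_iff_forall.1 hcomp) w

theorem exists_isConnectedShrinking [DecidableEq ι] (hH : IsHypertree H) :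
    ∃ p, IsConnectedShrinking H p := by
  induction hn : ∑ i, #(H i) using Nat.strong_induction_on generalizing H with
  | _ n ih =>
    by_cases hbig : ∃ i, 3 ≤ #(H i)
    · obtain ⟨i, hi⟩ := hbig
      obtain ⟨v, hv, hH'⟩ := hH.exists_isHypertree_update_erase hi
      have hsub (j : ι) : update H i ((H i).erase v) j ⊆ H j := by
        rcases eq_or_ne j i with rfl | hji
        · simpa using erase_subset v (H j)
        · rw [update_of_ne hji]
      have hlt : ∑ j, #(update H i ((H i).erase v) j) < n := by
        rw [← hn]
        refine sum_lt_sum (fun j _ => card_le_card (hsub j)) ⟨i, mem_univ _, ?_⟩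
        rw [update_self, card_erase_of_mem hv]
        omega
      obtain ⟨p, hp⟩ := ih _ hlt hH' rfl
      exact ⟨p, hp.mono hsub⟩
    · push Not at hbig
      exact hH.exists_isConnectedShrinking_of_card_eq_two fun i =>
        le_antisymm (Nat.le_of_lt_succ (hbig i)) (hH.two_le_card i)

end IsHypertree

namespace Shrinking

section Potential

variable [DecidableEq V] [Fintype ι]

def targetDegree (H : ι → Finset V) (k : ℕ) (u : V) : ℕ := #{i | u ∈ H i} ⌈/⌉ (2 * k)

/-- Because of the cap, moving one unit of degree to a deficient vertex gains exactly one, so at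
a maximum the vertex that loses it must have been at or below its target
(`Fintype.sum_min_transfer`). -/
def potential [Fintype V] (H : ι → Finset V) (k : ℕ) (p : ι → Sym2 V) : ℕ :=
  ∑ u, min #{i | u ∈ p i} (targetDegree H k u)

def IsDeficient (H : ι → Finset V) (k : ℕ) (p : ι → Sym2 V) (u : V) : Prop :=
  2 * k * #{i | u ∈ p i} < #{i | u ∈ H i}

variable {H : ι → Finset V} {k : ℕ}

theorem lt_targetDegree_iff (hk : 0 < k) {u : V} {d : ℕ} :
    d < targetDegree H k u ↔ 2 * k * d < #{i | u ∈ H i} := by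
  rw [targetDegree, ← not_le, ceilDiv_le_iff_le_mul (by omega), not_le]

theorem card_mem_update_swap [DecidableEq ι] {p : ι → Sym2 V} {i : ι} {t a b : V}
    (hab : p i = s(a, b)) (hta : t ≠ a) (htb : t ≠ b) (hba : a ≠ b) (u : V) :
    (#{j | u ∈ update p i s(t, b) j} : ℤ) =
      #{j | u ∈ p j} + (if u = t then 1 else 0) - (if u = a then 1 else 0) := by
  have hupd := card_filter_update_add p i s(t, b) (u ∈ ·)
  simp only [hab, Sym2.mem_iff] at hupd
  rcases eq_or_ne u t with rfl | hut
  · simp only [hta, htb, or_self, if_false, or_false, if_true] at hupd ⊢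
    omega
  rcases eq_or_ne u a with rfl | hua
  · simp only [hut, hba, true_or, if_true, false_or, if_false] at hupd ⊢
    omega
  · simp only [hut, hua, false_or, if_false] at hupd ⊢
    omega

end Potential

section Cascade

variable [DecidableEq ι]

/-- `swap` re-shrinks the hyperedge `i` from `ab` to `tb`, moving one unit of degree from `a` to
the current tail `t`; `a` becomes the new tail. -/
inductive Cascade (H : ι → Finset V) (p₀ : ι → Sym2 V) (v : V) : (ι → Sym2 V) → V → Prop
  | refl : Cascade H p₀ v p₀ v
  | swap {p : ι → Sym2 V} {t : V} (i : ι) {a b : V} : Cascade H p₀ v p t → t ∈ H i →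
      t ∉ p i → p i = s(a, b) →
      ((fromEdgeSet (Set.range p)).deleteEdges {s(a, b)}).Reachable t a →
      Cascade H p₀ v (update p i s(t, b)) a

namespace Cascade

variable {H : ι → Finset V} {k : ℕ} {p₀ p : ι → Sym2 V} {v t : V}

theorem exists_mem_of_ne (hc : Cascade H p₀ v p t) {i : ι} (hi : p i ≠ p₀ i) :
    ∃ x ∈ p₀ i, ∃ q, Cascade H p₀ v q x := by
  induction hc with
  | refl => exact absurd rfl hi
  | @swap p t j a b hc ht htp hab hreach ih =>
    rcases eq_or_ne i j with rfl | hij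
    · by_cases h : p i = p₀ i
      · exact ⟨a, h ▸ hab ▸ Sym2.mem_mk_left a b, _, hc.swap i ht htp hab hreach⟩
      · exact ih h
    · exact ih (by rwa [update_of_ne hij] at hi)

variable [Fintype V] [DecidableEq V] [Fintype ι]

theorem invariant (hH : IsHypertree H) (hk : 0 < k) (hp₀ : IsConnectedShrinking H p₀)
    (hmax : ∀ p, IsConnectedShrinking H p → potential H k p ≤ potential H k p₀)
    (hv : IsDeficient H k p₀ v) (hc : Cascade H p₀ v p t) :
    IsConnectedShrinking H p ∧ potential H k p = potential H k p₀ ∧ IsDeficient H k p t ∧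
      ∀ u, (#{i | u ∈ p i} : ℤ) =
        #{i | u ∈ p₀ i} + (if u = v then 1 else 0) - (if u = t then 1 else 0) := by
  induction hc with
  | refl => exact ⟨hp₀, rfl, hv, fun u => by ring⟩
  | @swap p t i a b hc ht htp hab hreach ih =>
    obtain ⟨hp, hpot, hdef, hdeg⟩ := ih
    have hta : t ≠ a := by rintro rfl; exact htp (hab ▸ Sym2.mem_mk_left t b)
    have htb : t ≠ b := by rintro rfl; exact htp (hab ▸ Sym2.mem_mk_right a t)
    have hba : a ≠ b := by
      rintro rfl
      exact hp.not_isDiag hH.card_add_one i (hab ▸ Sym2.mk_isDiag_iff.2 rfl)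
    have hp' := hp.update_swap ht hab htb hreach
    have hdeg' := card_mem_update_swap hab hta htb hba
    have hle : potential H k (update p i s(t, b)) ≤ potential H k p := hpot ▸ hmax _ hp'
    obtain ⟨hlt, heq⟩ :=
      Fintype.sum_min_transfer hta hdeg' ((lt_targetDegree_iff hk).2 hdef) hle
    refine ⟨hp', heq.trans hpot, (lt_targetDegree_iff hk).1 hlt, fun u => ?_⟩
    rw [hdeg', hdeg]
    ring

theorem exists_mem_of_notMem (hH : IsHypertree H) (hk : 0 < k)
    (hp₀ : IsConnectedShrinking H p₀)
    (hmax : ∀ p, IsConnectedShrinking H p → potential H k p ≤ potential H k p₀)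
    (hv : IsDeficient H k p₀ v) (hc : Cascade H p₀ v p t) {i : ι} (ht : t ∈ H i)
    (htp : t ∉ p i) : ∃ x ∈ p₀ i, ∃ q, Cascade H p₀ v q x := by
  by_cases hi : p i = p₀ i
  · obtain ⟨a, b, hab⟩ : ∃ a b, p i = s(a, b) := Sym2.ind (fun a b => ⟨a, b, rfl⟩) (p i)
    have hreach := (hc.invariant hH hk hp₀ hmax hv).1.connected.preconnected t a
    rcases hreach.deleteEdges_or b with h | h
    · exact ⟨a, hi ▸ hab ▸ Sym2.mem_mk_left a b, _, hc.swap i ht htp hab h⟩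
    · refine ⟨b, hi ▸ hab ▸ Sym2.mem_mk_right a b, _,
        hc.swap i ht htp (hab.trans Sym2.eq_swap) ?_⟩
      rwa [Sym2.eq_swap]
  · exact hc.exists_mem_of_ne hi

end Cascade

end Cascade

variable [DecidableEq V] [Fintype ι] [DecidableEq ι] {H : ι → Finset V} {k : ℕ}
  {p₀ : ι → Sym2 V}

theorem false_of_closed_deficient_witnesses (hrank : ∀ i, #(H i) ≤ k) {S : Finset V} {v : V}
    (hvS : v ∈ S) {W : V → ι → Sym2 V} (hmem : ∀ u ∈ S, ∀ i, u ∈ W u i → u ∈ H i)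
    (hpos : ∀ u ∈ S, ∃ i, u ∈ W u i) (hdef : ∀ u ∈ S, IsDeficient H k (W u) u)
    (hdeg : ∀ u ∈ S, #{i | u ∈ W u i} + 1 = #{i | u ∈ p₀ i} + if u = v then 1 else 0)
    (hclosed : ∀ u ∈ S, ∀ i, u ∈ H i → u ∉ W u i → ∃ x ∈ S, x ∈ p₀ i) : False := by
  obtain ⟨i₀, hi₀⟩ := hpos v hvS
  have hk : 1 ≤ k := (card_pos.2 ⟨v, hmem v hvS i₀ hi₀⟩).trans_le (hrank i₀)
  have hmiss := sum_card_filter_le_mul_sum_card hrank p₀ (S := S)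
    (R := fun u i => u ∈ H i ∧ u ∉ W u i) fun u hu i ⟨huH, huW⟩ =>
      ⟨huH, hclosed u hu i huH huW⟩
  have hsplit (u : V) (hu : u ∈ S) :
      #{i | u ∈ H i ∧ u ∉ W u i} + #{i | u ∈ W u i} = #{i | u ∈ H i} := by
    have hWH : filter (fun i => u ∈ W u i) univ =
        filter (fun i => u ∈ H i ∧ u ∈ W u i) univ :=
      filter_congr fun i _ => ⟨fun h => ⟨hmem u hu i h, h⟩, And.right⟩
    rw [hWH, ← filter_filter, ← filter_filter, add_comm]
    exact card_filter_add_card_filter_not _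
  have hsumH := sum_congr rfl hsplit
  have hsum₀ := sum_congr rfl hdeg
  have hsumdef : ∑ u ∈ S, (2 * k * #{i | u ∈ W u i} + 1) ≤ ∑ u ∈ S, #{i | u ∈ H i} :=
    sum_le_sum hdef
  have hsumpos : ∑ u ∈ S, 1 ≤ ∑ u ∈ S, #{i | u ∈ W u i} :=
    sum_le_sum fun u hu => card_pos.2 <| (hpos u hu).imp fun i => (mem_filter_univ _).2
  rw [sum_add_distrib] at hsumH
  rw [sum_add_distrib, sum_add_distrib, sum_ite_eq', if_pos hvS] at hsum₀
  rw [sum_add_distrib, ← mul_sum] at hsumdef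
  -- With `w = ∑ #{i | u ∈ W u i}`: `2kw + |S| ≤ ∑ d_H ≤ k (w + |S| - 1) + w`, while `|S| ≤ w`.
  nlinarith

variable [Fintype V]

theorem not_isDeficient_of_potential_le (hH : IsHypertree H) (hrank : ∀ i, #(H i) ≤ k)
    (hp₀ : IsConnectedShrinking H p₀)
    (hmax : ∀ p, IsConnectedShrinking H p → potential H k p ≤ potential H k p₀) (v : V) :
    ¬IsDeficient H k p₀ v := by
  classical
  intro hv
  obtain ⟨i₀, hi₀⟩ : ∃ i, v ∈ H i := by
    by_contra! h
    simp [IsDeficient, h] at hv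
  have hk : 0 < k := by have := hH.two_le_card i₀; have := hrank i₀; omega
  have : Nontrivial V := Fintype.one_lt_card_iff_nontrivial.1 (by
    have := hH.card_add_one; have := Fintype.card_pos_iff.2 ⟨i₀⟩; omega)
  let S : Finset V := {u | ∃ q, Cascade H p₀ v q u}
  choose! W hW using fun u (hu : u ∈ S) => (mem_filter_univ _).1 hu
  have hinv (u : V) (hu : u ∈ S) := (hW u hu).invariant hH hk hp₀ hmax hv
  refine false_of_closed_deficient_witnesses (p₀ := p₀) hrank ((mem_filter_univ _).2 ⟨p₀, .refl⟩)
    (fun u hu i => (hinv u hu).1.mem i u) (fun u hu => (hinv u hu).1.exists_mem u)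
    (fun u hu => (hinv u hu).2.2.1) (fun u hu => ?_) fun u hu i huH huW => ?_
  · have h := (hinv u hu).2.2.2 u
    rw [if_pos rfl] at h
    split_ifs at h ⊢ <;> omega
  · obtain ⟨x, hx, q, hq⟩ := (hW u hu).exists_mem_of_notMem hH hk hp₀ hmax hv huH huW
    exact ⟨x, (mem_filter_univ _).2 ⟨q, hq⟩, hx⟩

end Shrinking

theorem IsHypertree.exists_isConnectedShrinking_not_isDeficient [Fintype V] [DecidableEq V]
    [Fintype ι] [DecidableEq ι] {H : ι → Finset V} {k : ℕ} (hH : IsHypertree H)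
    (hrank : ∀ i, #(H i) ≤ k) :
    ∃ p, IsConnectedShrinking H p ∧ ∀ v, ¬Shrinking.IsDeficient H k p v := by
  obtain ⟨p, hp, hmax⟩ := Set.exists_max_image {p | IsConnectedShrinking H p}
    (Shrinking.potential H k) (Set.toFinite _) hH.exists_isConnectedShrinking
  exact ⟨p, hp, Shrinking.not_isDeficient_of_potential_le hH hrank hp hmax⟩

end

theorem hypertree_shrink_degree_half_k_bound_general
    {V : Type*} [Fintype V] [DecidableEq V] [Nonempty V]
    (k : ℕ)
    (E : Finset (Finset V))
    (hrank : ∀ e ∈ E, e.card ≤ k)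
    (hsub : ∀ X : Finset V, (E.filter (fun e => e ⊆ X)).card ≤ X.card - 1)
    (hfull : E.card = Fintype.card V - 1) :
    ∃ (T : SimpleGraph V) (σ : Finset V → Sym2 V),
      T.IsTree ∧
      (∀ e ∈ E, ¬ (σ e).IsDiag) ∧
      (∀ e ∈ E, ∀ v ∈ σ e, v ∈ e) ∧
      Set.BijOn σ ↑E T.edgeSet ∧
      ∀ v : V,
        ((E.filter (fun e => v ∈ e)).card : ℝ) / (2 * k) ≤
          ((T.neighborSet v).ncard : ℝ) := by
  classical
  have hH := IsHypertree.of_finset hsub hfull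
  have hcard := hH.card_add_one
  obtain ⟨p, hp, hdef⟩ := hH.exists_isConnectedShrinking_not_isDeficient fun i => hrank i i.2
  obtain ⟨hE, hinj⟩ := hp.edgeSet_eq_range_and_injective hcard
  let σ (e : Finset V) : Sym2 V :=
    if h : e ∈ E then p ⟨e, h⟩ else s(Classical.arbitrary V, Classical.arbitrary V)
  have hσ {e : Finset V} (he : e ∈ E) : σ e = p ⟨e, he⟩ := dif_pos he
  refine ⟨fromEdgeSet (Set.range p), σ, hp.isTree hcard,
    fun e he => hσ he ▸ hp.not_isDiag hcard _, fun e he => hσ he ▸ hp.mem _,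
    ⟨fun e he => ?_, fun e he e' he' h => ?_, fun q hq => ?_⟩, fun v => ?_⟩
  · rw [hE, hσ he]
    exact Set.mem_range_self _
  · rw [hσ he, hσ he'] at h
    exact congrArg Subtype.val (hinj h)
  · obtain ⟨⟨e, he⟩, rfl⟩ := hE ▸ hq
    exact ⟨e, he, hσ he⟩
  · have hv := hdef v
    rw [Shrinking.IsDeficient, not_lt, card_filter_univ_coe E (v ∈ ·)] at hv
    rw [hp.ncard_neighborSet hcard]
    refine div_le_of_le_mul₀ (by positivity) (by positivity) ?_
    rw [mul_comm]
    exact_mod_cast hv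

/-- **Theorem (shrinking with a `d_H(v)/(2k)` degree bound).**
Let `H = (V, E)` be a hypertree in which every hyperedge has size at most `k`,
where `k ≥ 2`.  Then `H` can be shrunk to a tree `T` on the same vertex set such
that for every vertex `v`, the degree of `v` in `T` is at least `d_H(v)/(2k)`. -/
theorem hypertree_shrink_degree_half_k_bound
    {V : Type*} [Fintype V] [DecidableEq V] [Nonempty V]
    (k : ℕ) (hk : 2 ≤ k)
    (E : Finset (Finset V))
    (hsimple : ∀ e ∈ E, 2 ≤ e.card)
    (hrank : ∀ e ∈ E, e.card ≤ k)
    (hsub : ∀ X : Finset V, (E.filter (fun e => e ⊆ X)).card ≤ X.card - 1)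
    (hfull : E.card = Fintype.card V - 1) :
    ∃ (T : SimpleGraph V) (σ : Finset V → Sym2 V),
      T.IsTree ∧
      (∀ e ∈ E, ¬ (σ e).IsDiag) ∧
      (∀ e ∈ E, ∀ v ∈ σ e, v ∈ e) ∧
      Set.BijOn σ ↑E T.edgeSet ∧
      ∀ v : V,
        ((E.filter (fun e => v ∈ e)).card : ℝ) / (2 * k) ≤
          ((T.neighborSet v).ncard : ℝ) :=
  hypertree_shrink_degree_half_k_bound_general k E hrank hsub hfull
end

section
/- Let G be a finite graph of order n with a (not necessarily proper) edge colouring. Then G contains a rainbow spanning tree if and only if for every set of r colours with 0 ≤ r ≤ n − 2, the graph obtained from G by removing all edges coloured with one of these r colours has at most r + 1 connected components. -/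
/-!
A rainbow spanning tree loses at most `k` edges when the edges of `k` colours are deleted, so at
most `k + 1` components remain.

Conversely, induct on the number of edges. If the colouring is injective on `G`, every spanning
tree is rainbow. Otherwise take two edges `e₁ ≠ e₂` of one colour `c`; the condition survives the
deletion of one of them. If not, there are colour sets `Sᵢ ∌ c` that are tight (deleting them
leaves exactly `|Sᵢ| + 1` components) and in which `eᵢ` is a bridge. The number of components is
supermodular in the graph (the rank of the graphic matroid is submodular), so `S₁ ∪ S₂` is tight
as well. But once `c` is deleted too, adding back `e₁` and then `e₂` merges two components each
time, so deleting the `|S₁ ∪ S₂| + 1` colours of `insert c (S₁ ∪ S₂)` leaves `|S₁ ∪ S₂| + 3`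
components.
-/

theorem Nat.card_eq_card_add_one_of_injOn_compl {α β : Type*} [Finite α] {f : α → β}
    (hf : Function.Surjective f) {p q : α} (hpq : p ≠ q) (hfpq : f p = f q) (hinj : Set.InjOn f {q}ᶜ) :
    Nat.card α = Nat.card β + 1 := by
  have himage : f '' {q}ᶜ = Set.univ := by
    refine Set.eq_univ_of_forall fun b => ?_
    obtain ⟨a, rfl⟩ := hf b
    by_cases haq : a = q
    · exact ⟨p, by simpa [haq] using hpq, by rw [hfpq, haq]⟩
    · exact ⟨a, haq, rfl⟩
  calc Nat.card α = ({q}ᶜ : Set α).ncard + 1 := by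
        rw [← Set.ncard_compl_add_ncard {q}, Set.ncard_singleton]
    _ = Nat.card β + 1 := by rw [← hinj.ncard_image, himage, Set.ncard_univ]

namespace SimpleGraph

variable {V : Type*} {G G' : SimpleGraph V} {u v : V}

theorem reachable_sup_edge_iff {a b : V} :
    (G ⊔ edge u v).Reachable a b ↔
      G.Reachable a b ∨
        (G.Reachable a u ∨ G.Reachable a v) ∧ (G.Reachable b u ∨ G.Reachable b v) := by
  constructor
  · rintro ⟨p⟩
    induction p with
    | nil => exact .inl .rfl
    | @cons x y b hxy p ih =>
      rcases (sup_adj _ _ _ _).mp hxy with hxy | hxy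
      · exact ih.imp hxy.reachable.trans
          (And.imp_left (Or.imp hxy.reachable.trans hxy.reachable.trans))
      · obtain ⟨⟨rfl, rfl⟩ | ⟨rfl, rfl⟩, -⟩ := (edge_adj ..).mp hxy
        · exact .inr ⟨.inl .rfl, ih.elim (fun h => .inr h.symm) And.right⟩
        · exact .inr ⟨.inr .rfl, ih.elim (fun h => .inl h.symm) And.right⟩
  · have huv : (G ⊔ edge u v).Reachable u v := by
      by_cases h : u = v
      · exact h ▸ .rfl
      · exact Adj.reachable ((sup_adj _ _ _ _).mpr (.inr ((edge_adj ..).mpr ⟨.inl ⟨rfl, rfl⟩, h⟩)))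
    have hmono := fun {x y : V} (h : G.Reachable x y) => h.mono (le_sup_left : G ≤ G ⊔ edge u v)
    rintro (h | ⟨ha | ha, hb | hb⟩)
    · exact hmono h
    · exact (hmono ha).trans (hmono hb).symm
    · exact ((hmono ha).trans huv).trans (hmono hb).symm
    · exact ((hmono ha).trans huv.symm).trans (hmono hb).symm
    · exact (hmono ha).trans (hmono hb).symm

theorem card_connectedComponent_sup_edge_of_reachable (h : G.Reachable u v) :
    Nat.card (G ⊔ edge u v).ConnectedComponent = Nat.card G.ConnectedComponent := by
  refine (Nat.card_eq_of_bijective _ ⟨?_, ConnectedComponent.surjective_map_ofLE le_sup_left⟩).symm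
  refine ConnectedComponent.ind₂ fun a b hab => ?_
  simp only [ConnectedComponent.map_mk, Hom.ofLE_apply, ConnectedComponent.eq,
    reachable_sup_edge_iff] at hab ⊢
  rcases hab with hab | ⟨ha | ha, hb | hb⟩
  · exact hab
  · exact ha.trans hb.symm
  · exact (ha.trans h).trans hb.symm
  · exact (ha.trans h.symm).trans hb.symm
  · exact ha.trans hb.symm

variable [Finite V]

theorem card_connectedComponent_sup_edge_add_one (h : ¬G.Reachable u v) :
    Nat.card (G ⊔ edge u v).ConnectedComponent + 1 = Nat.card G.ConnectedComponent := by
  refine (Nat.card_eq_card_add_one_of_injOn_compl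
    (ConnectedComponent.surjective_map_ofLE (le_sup_left : G ≤ G ⊔ edge u v))
    (p := G.connectedComponentMk u) (q := G.connectedComponentMk v)
    (by simpa [ConnectedComponent.eq] using h) ?_ ?_).symm
  · simp only [ConnectedComponent.map_mk, Hom.ofLE_apply, ConnectedComponent.eq,
      reachable_sup_edge_iff]
    exact .inr ⟨.inl .rfl, .inr .rfl⟩
  · intro x hx y hy hxy
    induction x using ConnectedComponent.ind
    induction y using ConnectedComponent.ind
    simp only [Set.mem_compl_iff, Set.mem_singleton_iff, ConnectedComponent.eq,
      ConnectedComponent.map_mk, Hom.ofLE_apply, reachable_sup_edge_iff] at hx hy hxy ⊢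
    grind [Reachable.trans, Reachable.symm]

theorem card_connectedComponent_le_sup_edge_add_one (G : SimpleGraph V) (u v : V) :
    Nat.card G.ConnectedComponent ≤ Nat.card (G ⊔ edge u v).ConnectedComponent + 1 := by
  by_cases h : G.Reachable u v
  · rw [card_connectedComponent_sup_edge_of_reachable h]; omega
  · rw [card_connectedComponent_sup_edge_add_one h]

theorem card_connectedComponent_add_sup_edge_le (hle : G ≤ G') (u v : V) :
    Nat.card G'.ConnectedComponent + Nat.card (G ⊔ edge u v).ConnectedComponent ≤
      Nat.card G.ConnectedComponent + Nat.card (G' ⊔ edge u v).ConnectedComponent := by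
  by_cases h : G.Reachable u v
  · rw [card_connectedComponent_sup_edge_of_reachable h,
      card_connectedComponent_sup_edge_of_reachable (h.mono hle), add_comm]
  · have := card_connectedComponent_sup_edge_add_one h
    have := card_connectedComponent_le_sup_edge_add_one G' u v
    omega

theorem card_connectedComponent_add_sup_fromEdgeSet_le (hle : G ≤ G') (s : Set (Sym2 V)) :
    Nat.card G'.ConnectedComponent + Nat.card (G ⊔ fromEdgeSet s).ConnectedComponent ≤
      Nat.card G.ConnectedComponent + Nat.card (G' ⊔ fromEdgeSet s).ConnectedComponent := by
  induction s, s.toFinite using Set.Finite.induction_on with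
  | empty => simp [add_comm]
  | @insert e s _ _ ih =>
    induction e with | h u v =>
    have hsup : ∀ H : SimpleGraph V,
        H ⊔ fromEdgeSet (insert s(u, v) s) = H ⊔ fromEdgeSet s ⊔ edge u v := fun H => by
      rw [Set.insert_eq, fromEdgeSet_union, sup_comm (fromEdgeSet _), ← sup_assoc]; rfl
    rw [hsup, hsup]
    have := card_connectedComponent_add_sup_edge_le (sup_le_sup_right hle (fromEdgeSet s)) u v
    omega

theorem card_connectedComponent_add_card_le_inf_add_sup (G₁ G₂ : SimpleGraph V) :
    Nat.card G₁.ConnectedComponent + Nat.card G₂.ConnectedComponent ≤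
      Nat.card (G₁ ⊓ G₂).ConnectedComponent + Nat.card (G₁ ⊔ G₂).ConnectedComponent := by
  simpa [fromEdgeSet_edgeSet, inf_le_right] using
    card_connectedComponent_add_sup_fromEdgeSet_le (inf_le_left : G₁ ⊓ G₂ ≤ G₁) G₂.edgeSet

theorem card_connectedComponent_le_sup_fromEdgeSet_add_ncard (G : SimpleGraph V)
    (s : Set (Sym2 V)) :
    Nat.card G.ConnectedComponent ≤ Nat.card (G ⊔ fromEdgeSet s).ConnectedComponent + s.ncard := by
  induction s, s.toFinite using Set.Finite.induction_on with
  | empty => simp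
  | @insert e s he _ ih =>
    induction e with | h u v =>
    rw [Set.ncard_insert_of_notMem he, Set.insert_eq, fromEdgeSet_union, sup_comm (fromEdgeSet _),
      ← sup_assoc]
    have := card_connectedComponent_le_sup_edge_add_one (G ⊔ fromEdgeSet s) u v
    exact ih.trans (by unfold edge at this; omega)

theorem card_connectedComponent_deleteEdges_le_add_ncard (G : SimpleGraph V) (s : Set (Sym2 V)) :
    Nat.card (G.deleteEdges s).ConnectedComponent ≤ Nat.card G.ConnectedComponent + s.ncard :=
  (card_connectedComponent_le_sup_fromEdgeSet_add_ncard _ s).trans <| Nat.add_le_add_right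
    (ConnectedComponent.card_le_card_of_le le_sdiff_sup) _

theorem mem_edgeSet_and_isBridge_of_card_connectedComponent_lt {e : Sym2 V}
    (h : Nat.card G.ConnectedComponent < Nat.card (G.deleteEdges {e}).ConnectedComponent) :
    e ∈ G.edgeSet ∧ G.IsBridge e := by
  induction e with | h u v =>
  refine ⟨by_contra fun he => ?_, fun hr => ?_⟩
  · rw [deleteEdges_eq_self.mpr (Set.disjoint_singleton_right.mpr he)] at h
    exact h.false
  · have hle : G ≤ G.deleteEdges {s(u, v)} ⊔ edge u v := le_sdiff_sup
    have := ConnectedComponent.card_le_card_of_le hle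
    rw [card_connectedComponent_sup_edge_of_reachable hr] at this
    omega

variable {C : Type*} (col : Sym2 V → C)

def ColourCutCondition (G : SimpleGraph V) : Prop :=
  ∀ S : Finset C, Nat.card (G.deleteEdges {e | col e ∈ S}).ConnectedComponent ≤ S.card + 1

variable {col}

theorem ColourCutCondition.of_isTree_le {T : SimpleGraph V} (hT : T.IsTree) (hTG : T ≤ G)
    (hinj : Set.InjOn col T.edgeSet) : ColourCutCondition col G := by
  intro S
  set s := {e | col e ∈ S}
  have hT₁ : Nat.card T.ConnectedComponent ≤ 1 :=
    Finite.card_le_one_iff_subsingleton.mpr hT.1.preconnected.subsingleton_connectedComponent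
  have hcard : (s ∩ T.edgeSet).ncard ≤ S.card :=
    (Set.ncard_le_ncard_of_injOn col (t := (S : Set C)) (fun e he => he.1)
      (hinj.mono Set.inter_subset_right)).trans (Set.ncard_coe_finset S).le
  calc Nat.card (G.deleteEdges s).ConnectedComponent
      ≤ Nat.card (T.deleteEdges (s ∩ T.edgeSet)).ConnectedComponent := by
        rw [← deleteEdges_eq_inter_edgeSet]
        exact ConnectedComponent.card_le_card_of_le (deleteEdges_mono hTG)
    _ ≤ Nat.card T.ConnectedComponent + (s ∩ T.edgeSet).ncard :=
        card_connectedComponent_deleteEdges_le_add_ncard T _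
    _ ≤ S.card + 1 := by omega

theorem ColourCutCondition.connected [Nonempty V] (h : ColourCutCondition col G) :
    G.Connected := by
  have h₀ : Nat.card G.ConnectedComponent ≤ 1 := by simpa using h ∅
  have := Finite.card_le_one_iff_subsingleton.mp h₀
  exact (connected_iff G).mpr ⟨fun u v => ConnectedComponent.exact (Subsingleton.elim _ _), ‹_›⟩

theorem ColourCutCondition.exists_tight_isBridge (h : ColourCutCondition col G) {e : Sym2 V}
    (he : ¬ColourCutCondition col (G.deleteEdges {e})) :
    ∃ S : Finset C, col e ∉ S ∧
      Nat.card (G.deleteEdges {f | col f ∈ S}).ConnectedComponent = S.card + 1 ∧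
      (G.deleteEdges {f | col f ∈ S}).IsBridge e := by
  simp only [ColourCutCondition, not_forall, not_le] at he
  obtain ⟨S, hS⟩ := he
  rw [deleteEdges_deleteEdges, Set.union_comm, ← deleteEdges_deleteEdges] at hS
  have hS' := h S
  have hle := card_connectedComponent_deleteEdges_le_add_ncard (G.deleteEdges {f | col f ∈ S}) {e}
  obtain ⟨hmem, hbridge⟩ := mem_edgeSet_and_isBridge_of_card_connectedComponent_lt (hS'.trans_lt hS)
  rw [Set.ncard_singleton] at hle
  rw [edgeSet_deleteEdges] at hmem
  exact ⟨S, hmem.2, by omega, hbridge⟩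

theorem ColourCutCondition.card_deleteEdges_union_eq [DecidableEq C] (h : ColourCutCondition col G)
    {S₁ S₂ : Finset C}
    (h₁ : Nat.card (G.deleteEdges {e | col e ∈ S₁}).ConnectedComponent = S₁.card + 1)
    (h₂ : Nat.card (G.deleteEdges {e | col e ∈ S₂}).ConnectedComponent = S₂.card + 1) :
    Nat.card (G.deleteEdges {e | col e ∈ S₁ ∪ S₂}).ConnectedComponent = (S₁ ∪ S₂).card + 1 := by
  have hinf : G.deleteEdges {e | col e ∈ S₁} ⊓ G.deleteEdges {e | col e ∈ S₂} =
      G.deleteEdges {e | col e ∈ S₁ ∪ S₂} := by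
    ext; simp only [inf_adj, deleteEdges_adj, Set.mem_ofPred_eq, Finset.mem_union]; tauto
  have hsup : G.deleteEdges {e | col e ∈ S₁} ⊔ G.deleteEdges {e | col e ∈ S₂} =
      G.deleteEdges {e | col e ∈ S₁ ∩ S₂} := by
    ext; simp only [sup_adj, deleteEdges_adj, Set.mem_ofPred_eq, Finset.mem_inter]; tauto
  have := card_connectedComponent_add_card_le_inf_add_sup
    (G.deleteEdges {e | col e ∈ S₁}) (G.deleteEdges {e | col e ∈ S₂})
  rw [hinf, hsup] at this
  have := h (S₁ ∪ S₂)
  have := h (S₁ ∩ S₂)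
  have := Finset.card_union_add_card_inter S₁ S₂
  omega

theorem ColourCutCondition.deleteEdges_or_deleteEdges [DecidableEq C]
    (h : ColourCutCondition col G) {e₁ e₂ : Sym2 V} (he₁ : e₁ ∈ G.edgeSet) (he₂ : e₂ ∈ G.edgeSet)
    (hne : e₁ ≠ e₂) (hcol : col e₁ = col e₂) :
    ColourCutCondition col (G.deleteEdges {e₁}) ∨ ColourCutCondition col (G.deleteEdges {e₂}) := by
  by_contra! hbad
  obtain ⟨S₁, hc₁, htight₁, hbridge₁⟩ := h.exists_tight_isBridge hbad.1
  obtain ⟨S₂, hc₂, htight₂, hbridge₂⟩ := h.exists_tight_isBridge hbad.2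
  induction e₁ with | h u₁ v₁ =>
  induction e₂ with | h u₂ v₂ =>
  set H := G.deleteEdges {e | col e ∈ insert (col s(u₁, v₁)) (S₁ ∪ S₂)}
  have hH : Nat.card H.ConnectedComponent ≤ (S₁ ∪ S₂).card + 2 :=
    (h _).trans (Nat.add_le_add_right (Finset.card_insert_le _ _) 1)
  have hH₁ : ¬H.Reachable u₁ v₁ := fun hr => hbridge₁ <| hr.mono <| by
    rw [deleteEdges_deleteEdges]
    refine deleteEdges_anti ?_
    rintro e (he | rfl) <;> simp_all
  have hH₂ : ¬(H ⊔ edge u₁ v₁).Reachable u₂ v₂ := fun hr => hbridge₂ <| hr.mono <| by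
    rw [deleteEdges_deleteEdges]
    refine sup_le (deleteEdges_anti ?_) ((edge_le_iff _).mpr (.inr ?_))
    · rintro e (he | rfl) <;> simp_all
    · simp_all
  have hle : H ⊔ edge u₁ v₁ ⊔ edge u₂ v₂ ≤ G.deleteEdges {e | col e ∈ S₁ ∪ S₂} := by
    refine sup_le (sup_le (deleteEdges_anti ?_) ((edge_le_iff _).mpr (.inr ?_)))
      ((edge_le_iff _).mpr (.inr ?_)) <;> simp_all
  have := card_connectedComponent_sup_edge_add_one hH₁
  have := card_connectedComponent_sup_edge_add_one hH₂
  have := ConnectedComponent.card_le_card_of_le hle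
  have := h.card_deleteEdges_union_eq htight₁ htight₂
  omega

theorem ColourCutCondition.exists_rainbow_isTree_le [Nonempty V]
    (h : ColourCutCondition col G) :
    ∃ T : SimpleGraph V, T ≤ G ∧ T.IsTree ∧ Set.InjOn col T.edgeSet := by
  classical
  induction G using WellFoundedLT.induction with | _ G ih =>
  by_cases hinj : Set.InjOn col G.edgeSet
  · obtain ⟨T, hTG, hT⟩ := h.connected.exists_isTree_le
    exact ⟨T, hTG, hT, hinj.mono (edgeSet_mono hTG)⟩
  obtain ⟨e₁, he₁, e₂, he₂, hcol, hne⟩ : ∃ e₁ ∈ G.edgeSet, ∃ e₂ ∈ G.edgeSet,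
      col e₁ = col e₂ ∧ e₁ ≠ e₂ := by
    simpa [Set.InjOn] using hinj
  have hlt {e : Sym2 V} (he : e ∈ G.edgeSet) : G.deleteEdges {e} < G :=
    (deleteEdges_le _).lt_of_ne fun heq => by
      rw [← heq, edgeSet_deleteEdges] at he; simp at he
  rcases h.deleteEdges_or_deleteEdges he₁ he₂ hne hcol with h' | h'
  · obtain ⟨T, hTG, hT⟩ := ih _ (hlt he₁) h'
    exact ⟨T, hTG.trans (deleteEdges_le _), hT⟩
  · obtain ⟨T, hTG, hT⟩ := ih _ (hlt he₂) h'
    exact ⟨T, hTG.trans (deleteEdges_le _), hT⟩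

end SimpleGraph

theorem rainbow_spanning_tree_iff_general
    {V : Type*} [Fintype V] [Nonempty V] {C : Type*}
    (G : SimpleGraph V) (col : Sym2 V → C) :
    (∃ T : SimpleGraph V, T ≤ G ∧ T.IsTree ∧ Set.InjOn col T.edgeSet) ↔
      ∀ S : Finset C, S.card ≤ Fintype.card V - 2 →
        Nat.card (G.deleteEdges {e | col e ∈ S}).ConnectedComponent ≤
          S.card + 1 := by
  refine ⟨fun ⟨T, hTG, hT, hinj⟩ S _ => SimpleGraph.ColourCutCondition.of_isTree_le hT hTG hinj S,
    fun h => SimpleGraph.ColourCutCondition.exists_rainbow_isTree_le fun S => ?_⟩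
  by_cases hS : S.card ≤ Fintype.card V - 2
  · exact h S hS
  · have := Nat.card_le_card_of_surjective (G.deleteEdges {e | col e ∈ S}).connectedComponentMk
      Quot.mk_surjective
    rw [Nat.card_eq_fintype_card (α := V)] at this
    omega

/-- **Theorem (characterisation of rainbow spanning trees).**
Let `G` be a finite edge-coloured graph of order `n` (colouring `col`, not
necessarily proper).  Then `G` contains a rainbow spanning tree (a spanning
tree no two of whose edges have the same colour) if and only if for every set
`S` of at most `n - 2` colours, deleting from `G` all edges whose colour lies
in `S` leaves a graph with at most `|S| + 1` connected components. -/
theorem rainbow_spanning_tree_iff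
    {V : Type*} [Fintype V] [Nonempty V] {C : Type*} [DecidableEq C]
    (G : SimpleGraph V) (col : Sym2 V → C) :
    (∃ T : SimpleGraph V, T ≤ G ∧ T.IsTree ∧ Set.InjOn col T.edgeSet) ↔
      ∀ S : Finset C, S.card ≤ Fintype.card V - 2 →
        Nat.card (G.deleteEdges {e | col e ∈ S}).ConnectedComponent ≤
          S.card + 1 :=
  rainbow_spanning_tree_iff_general G col
end

section
/- Let H be a hypertree with vertex set V, and let G_H be the edge-coloured graph on V obtained by adding, for each hyperedge e of H, a complete graph on the vertex set of e, with all edges arising from e coloured by a colour specific to e (so that edges arising from distinct hyperedges receive distinct colours). Then G_H contains a rainbow spanning tree. -/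
/-!
Fix a root `r`. The hypertree condition is Hall's condition for choosing, from each hyperedge,
a vertex other than `r`, and since `|E| = |V| - 1` the choice is a bijection: every vertex
`v ≠ r` owns a hyperedge `C v ∋ v`, distinct vertices owning distinct hyperedges. If `R ∋ r`
is a proper vertex set, then some `v ∉ R` has `C v` meeting `R`, as otherwise the `|V \ R|`
hyperedges `C v`, `v ∉ R`, would lie inside `V \ R`. Adding such vertices one by one, each
joined to a vertex of `C v` already present, grows a spanning tree whose edge `{v, p v}` gets
the colour `C v`.
-/

open Finset Function

namespace SimpleGraph

variable {V : Type*} {r : V} {p : V → V} {μ : V → ℕ}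

def parentEdge (r : V) (p : V → V) (v : {v // v ≠ r}) : Sym2 V := s(v.1, p v)

def parentGraph (r : V) (p : V → V) : SimpleGraph V :=
  fromEdgeSet (Set.range (parentEdge r p))

theorem parentGraph_adj_parent (hμ : ∀ v ≠ r, μ (p v) < μ v) {v : V} (hv : v ≠ r) :
    (parentGraph r p).Adj v (p v) :=
  (fromEdgeSet_adj _).2 ⟨⟨⟨v, hv⟩, rfl⟩, fun h => (hμ v hv).ne (congrArg μ h).symm⟩

theorem parentGraph_reachable_root (hμ : ∀ v ≠ r, μ (p v) < μ v) (v : V) :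
    (parentGraph r p).Reachable v r := by
  induction v using (measure μ).wf.induction with
  | _ v ih =>
    by_cases hv : v = r
    · exact hv ▸ Reachable.refl v
    · exact (parentGraph_adj_parent hμ hv).reachable.trans (ih (p v) (hμ v hv))

theorem parentGraph_connected (hμ : ∀ v ≠ r, μ (p v) < μ v) : (parentGraph r p).Connected :=
  (connected_iff _).2 ⟨fun a b => (parentGraph_reachable_root hμ a).trans
    (parentGraph_reachable_root hμ b).symm, ⟨r⟩⟩

theorem edgeSet_parentGraph (hμ : ∀ v ≠ r, μ (p v) < μ v) :
    (parentGraph r p).edgeSet = Set.range (parentEdge r p) := by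
  refine (edgeSet_fromEdgeSet _).trans (Disjoint.sdiff_eq_left ?_)
  rw [Set.disjoint_right]
  rintro _ hdiag ⟨⟨v, hv⟩, rfl⟩
  exact (hμ v hv).ne (congrArg μ (Sym2.mk_isDiag_iff.1 hdiag)).symm

theorem parentEdge_injective (hμ : ∀ v ≠ r, μ (p v) < μ v) :
    Injective (parentEdge r p) := by
  rintro ⟨v, hv⟩ ⟨w, hw⟩ h
  simp only [parentEdge, Sym2.eq_iff] at h
  rcases h with ⟨hvw, -⟩ | ⟨hvw, hwv⟩
  · exact Subtype.ext hvw
  · have hv' := hμ v hv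
    have hw' := hμ w hw
    rw [hwv] at hv'
    rw [← hvw] at hw'
    omega

theorem parentGraph_isTree [Finite V] (hμ : ∀ v ≠ r, μ (p v) < μ v) :
    (parentGraph r p).IsTree := by
  refine isTree_iff_connected_and_card.2 ⟨parentGraph_connected hμ, ?_⟩
  rw [edgeSet_parentGraph hμ, Nat.card_range_of_injective (parentEdge_injective hμ)]
  have := Fintype.ofFinite V
  have : Nonempty V := ⟨r⟩
  classical
  simp only [Nat.card_eq_fintype_card, Fintype.card_subtype_compl, Fintype.card_subtype_eq]
  exact Nat.sub_add_cancel Fintype.card_pos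

end SimpleGraph

section RankedParent

variable {V : Type*}

theorem exists_ranked_parent_insert [DecidableEq V] {r : V} {A : V → V → Prop} {R : Finset V}
    {p : V → V} {μ : V → ℕ} (hp : ∀ v ∈ R, v ≠ r → p v ∈ R ∧ A v (p v) ∧ μ (p v) < μ v)
    {v₀ u : V} (hv₀ : v₀ ∉ R) (hu : u ∈ R) (hA : A v₀ u) :
    ∃ (p' : V → V) (μ' : V → ℕ), ∀ v ∈ insert v₀ R, v ≠ r →
      p' v ∈ insert v₀ R ∧ A v (p' v) ∧ μ' (p' v) < μ' v := by
  have hne : ∀ w ∈ R, w ≠ v₀ := fun w hw h => hv₀ (h ▸ hw)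
  refine ⟨update p v₀ u, update μ v₀ (μ u + 1), fun v hv hvr => ?_⟩
  rcases mem_insert.1 hv with rfl | hvR
  · simp only [update_self, update_of_ne (hne u hu)]
    exact ⟨mem_insert_of_mem hu, hA, Nat.lt_succ_self _⟩
  · obtain ⟨hpR, hpA, hpμ⟩ := hp v hvR hvr
    simp only [update_of_ne (hne v hvR), update_of_ne (hne _ hpR)]
    exact ⟨mem_insert_of_mem hpR, hpA, hpμ⟩

theorem exists_ranked_parent [Fintype V] (r : V) (A : V → V → Prop)
    (hA : ∀ R : Finset V, r ∈ R → R ≠ univ → ∃ v ∉ R, ∃ u ∈ R, A v u) :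
    ∃ (p : V → V) (μ : V → ℕ), ∀ v ≠ r, A v (p v) ∧ μ (p v) < μ v := by
  classical
  let Spanned (R : Finset V) : Prop := ∃ (p : V → V) (μ : V → ℕ),
    ∀ v ∈ R, v ≠ r → p v ∈ R ∧ A v (p v) ∧ μ (p v) < μ v
  have grow : ∀ R : Finset V, #R ≤ Fintype.card V → r ∈ R → Spanned R → Spanned univ := by
    refine strongDownwardInduction fun R ih _ hr ⟨p, μ, hp⟩ => ?_
    by_cases hR : R = univ
    · exact hR ▸ ⟨p, μ, hp⟩
    obtain ⟨v₀, hv₀, u, hu, hvu⟩ := hA R hr hR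
    exact ih (card_le_univ _) (ssubset_insert hv₀) (mem_insert_of_mem hr)
      (exists_ranked_parent_insert hp hv₀ hu hvu)
  obtain ⟨p, μ, hp⟩ := grow {r} (card_le_univ _) (mem_singleton_self r)
    ⟨id, 0, fun v hv hvr => absurd (mem_singleton.1 hv) hvr⟩
  exact ⟨p, μ, fun v hv => (hp v (mem_univ v) hv).2⟩

end RankedParent

namespace Hypertree

variable {V : Type*} [DecidableEq V] {E : Finset (Finset V)}

theorem exists_injective_mem_erase (hsub : ∀ X : Finset V, #{e ∈ E | e ⊆ X} ≤ #X - 1) (r : V) :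
    ∃ m : E → V, Injective m ∧ ∀ e, m e ∈ e.1.erase r := by
  refine (all_card_le_biUnion_card_iff_exists_injective _).1 fun S => ?_
  set X := S.biUnion Subtype.val
  have hS : S.map (Embedding.subtype _) ⊆ {e ∈ E | e ⊆ X} := by
    simp only [subset_iff, mem_map, Embedding.coe_subtype, mem_filter]
    rintro _ ⟨e, he, rfl⟩
    exact ⟨e.2, subset_biUnion_of_mem Subtype.val he⟩
  calc #S = #(S.map (Embedding.subtype _)) := (card_map _).symm
    _ ≤ #X - 1 := (card_le_card hS).trans (hsub X)
    _ ≤ #(X.erase r) := pred_card_le_card_erase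
    _ = #(S.biUnion fun e => e.1.erase r) := by rw [erase_biUnion]

theorem exists_equiv_mem [Fintype V] (hsub : ∀ X : Finset V, #{e ∈ E | e ⊆ X} ≤ #X - 1)
    (hcard : #E = Fintype.card V - 1) (r : V) :
    ∃ C : {v // v ≠ r} ≃ E, ∀ v, v.1 ∈ (C v).1 := by
  obtain ⟨m, hm, hmem⟩ := exists_injective_mem_erase hsub r
  let m' : E → {v // v ≠ r} := fun e => ⟨m e, (mem_erase.1 (hmem e)).1⟩
  have hm' : Bijective m' := by
    refine (Fintype.bijective_iff_injective_and_card m').2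
      ⟨fun e f h => hm (congrArg Subtype.val h), ?_⟩
    rw [Fintype.card_coe, hcard, Fintype.card_subtype_compl, Fintype.card_subtype_eq]
  refine ⟨(Equiv.ofBijective m' hm').symm, fun v => ?_⟩
  have hv : m ((Equiv.ofBijective m' hm').symm v) = v :=
    congrArg Subtype.val ((Equiv.ofBijective m' hm').apply_symm_apply v)
  exact hv ▸ (mem_erase.1 (hmem _)).2

theorem exists_mem_not_subset (hsub : ∀ X : Finset V, #{e ∈ E | e ⊆ X} ≤ #X - 1) {r : V}
    {C : {v // v ≠ r} → E} (hC : Injective C) {X : Finset V} (hX : X.Nonempty) (hrX : r ∉ X) :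
    ∃ v : {v // v ≠ r}, v.1 ∈ X ∧ ¬(C v).1 ⊆ X := by
  by_contra! hclosed
  have hXr : #(X.subtype (· ≠ r)) = #X := by
    rw [card_subtype, filter_ne', erase_eq_of_notMem hrX]
  have : #X ≤ #X - 1 := by
    calc #X = #(X.subtype (· ≠ r)) := hXr.symm
      _ ≤ #{e ∈ E | e ⊆ X} := by
        refine card_le_card_of_injOn (fun v => (C v).1) (fun v hv => ?_)
          fun v _ w _ h => hC (Subtype.ext h)
        exact mem_filter.2 ⟨(C v).2, hclosed v (mem_subtype.1 hv)⟩
      _ ≤ #X - 1 := hsub X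
  have := hX.card_pos
  omega

end Hypertree

open SimpleGraph Hypertree

theorem hypertree_complete_blowup_has_rainbow_spanning_tree_general
    {V : Type*} [Fintype V] [DecidableEq V] [Nonempty V]
    (E : Finset (Finset V))
    (hsub : ∀ X : Finset V, (E.filter (fun e => e ⊆ X)).card ≤ X.card - 1)
    (hfull : E.card = Fintype.card V - 1) :
    ∃ (T : SimpleGraph V) (φ : Sym2 V → Finset V),
      T.IsTree ∧
      Set.InjOn φ T.edgeSet ∧
      ∀ s ∈ T.edgeSet, φ s ∈ E ∧ ∀ v ∈ s, v ∈ φ s := by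
  obtain ⟨r⟩ := ‹Nonempty V›
  obtain ⟨C, hC⟩ := exists_equiv_mem hsub hfull r
  obtain ⟨p, μ, hp⟩ := exists_ranked_parent r (fun v u => ∀ hv : v ≠ r, u ∈ (C ⟨v, hv⟩).1)
    fun R hr hR => by
      obtain ⟨v, hvR, hvC⟩ := exists_mem_not_subset hsub C.injective
        (sdiff_nonempty.2 fun h => hR (eq_univ_of_forall fun v => h (mem_univ v)))
        (fun h => (mem_sdiff.1 h).2 hr)
      obtain ⟨u, hu, huR⟩ := not_subset.1 hvC
      exact ⟨v, (mem_sdiff.1 hvR).2, u, by simpa using huR, fun _ => hu⟩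
  have hμ : ∀ v ≠ r, μ (p v) < μ v := fun v hv => (hp v hv).2
  have hφ := (parentEdge_injective hμ).extend_apply (fun v => (C v).1) fun _ => ∅
  refine ⟨parentGraph r p, extend (parentEdge r p) (fun v => (C v).1) fun _ => ∅,
    parentGraph_isTree hμ, ?_, ?_⟩ <;> rw [edgeSet_parentGraph hμ]
  · rintro _ ⟨v, rfl⟩ _ ⟨w, rfl⟩ h
    rw [hφ, hφ] at h
    rw [C.injective (Subtype.ext h)]
  · rintro _ ⟨v, rfl⟩
    refine hφ v ▸ ⟨(C v).2, fun u hu => ?_⟩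
    rcases Sym2.mem_iff.1 hu with rfl | rfl
    · exact hC v
    · exact (hp v v.2).1 v.2

/-- **The graph `G_H` of a hypertree has a rainbow spanning tree.**
Let `H = (V, E)` be a hypertree and let `G_H` be the edge-coloured graph on `V`
obtained by adding, for each hyperedge `e ∈ E`, a complete graph on `e`, all of
whose edges get a colour specific to `e`.  A rainbow spanning tree of `G_H` is
a tree `T` on `V` together with an assignment `φ` of a hyperedge (colour) to
each edge of `T` such that each edge of `T` joins two vertices of its assigned
hyperedge (so the edge lies in the complete graph on that hyperedge) and
distinct edges of `T` get distinct hyperedges.  We assert that such a rainbow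
spanning tree exists. -/
theorem hypertree_complete_blowup_has_rainbow_spanning_tree
    {V : Type*} [Fintype V] [DecidableEq V] [Nonempty V]
    (E : Finset (Finset V))
    (hsimple : ∀ e ∈ E, 2 ≤ e.card)
    (hsub : ∀ X : Finset V, (E.filter (fun e => e ⊆ X)).card ≤ X.card - 1)
    (hfull : E.card = Fintype.card V - 1) :
    ∃ (T : SimpleGraph V) (φ : Sym2 V → Finset V),
      T.IsTree ∧
      Set.InjOn φ T.edgeSet ∧
      ∀ s ∈ T.edgeSet, φ s ∈ E ∧ ∀ v ∈ s, v ∈ φ s :=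
  hypertree_complete_blowup_has_rainbow_spanning_tree_general E hsub hfull
end

section
/- Let G₁ and G₂ be two graphs on the same finite vertex set V, each with an edge colouring using the same colour set C, and suppose that for each colour c ∈ C, the subgraph of G₁ formed by the edges of colour c and the subgraph of G₂ formed by the edges of colour c are connected subgraphs spanning the same set of vertices. Then for every subset S ⊆ C of colours, the graph obtained from G₁ by deleting all edges whose colour lies in S has the same number of connected components (on the vertex set V) as the graph obtained from G₂ by deleting all edges whose colour lies in S. -/
private lemma reach_of_adj_reach {V : Type*} {G G' : SimpleGraph V}
    (h : ∀ a b, G.Adj a b → G'.Reachable a b) :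
    ∀ {u v : V}, G.Reachable u v → G'.Reachable u v := by
  intro u v ⟨w⟩
  induction w with
  | nil => exact SimpleGraph.Reachable.refl _
  | cons hadj _ ih => exact (h _ _ hadj).trans ih

private lemma key {V : Type*} {C : Type*}
    (G₁ G₂ : SimpleGraph V) (col₁ col₂ : Sym2 V → C)
    (hsupp : ∀ c : C,
      {v : V | ∃ e ∈ G₁.edgeSet, col₁ e = c ∧ v ∈ e} =
        {v : V | ∃ e ∈ G₂.edgeSet, col₂ e = c ∧ v ∈ e})
    (hconn₂ : ∀ c : C, ∀ u v : V,
      (∃ e ∈ G₂.edgeSet, col₂ e = c ∧ u ∈ e) →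
      (∃ e ∈ G₂.edgeSet, col₂ e = c ∧ v ∈ e) →
      (SimpleGraph.fromEdgeSet {e ∈ G₂.edgeSet | col₂ e = c}).Reachable u v)
    (S : Set C) {u v : V}
    (h : (G₁.deleteEdges {e | col₁ e ∈ S}).Reachable u v) :
    (G₂.deleteEdges {e | col₂ e ∈ S}).Reachable u v := by
  refine reach_of_adj_reach ?_ h
  intro a b hab
  rw [SimpleGraph.deleteEdges_adj] at hab
  obtain ⟨hadj, hnot⟩ := hab
  set c := col₁ s(a, b) with hc
  have ha : a ∈ {v : V | ∃ e ∈ G₂.edgeSet, col₂ e = c ∧ v ∈ e} := by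
    rw [← hsupp]; exact ⟨s(a,b), hadj, rfl, Sym2.mem_mk_left _ _⟩
  have hb : b ∈ {v : V | ∃ e ∈ G₂.edgeSet, col₂ e = c ∧ v ∈ e} := by
    rw [← hsupp]; exact ⟨s(a,b), hadj, rfl, Sym2.mem_mk_right _ _⟩
  have hr := hconn₂ c a b ha hb
  refine hr.mono ?_
  intro x y hxy
  rw [SimpleGraph.fromEdgeSet_adj] at hxy
  obtain ⟨⟨hxy₁, hxy₂⟩, _⟩ := hxy
  rw [SimpleGraph.deleteEdges_adj]
  refine ⟨hxy₁, ?_⟩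
  simp only [Set.mem_setOf_eq, hxy₂]
  exact hnot

/-- **Replacing colour classes by connected subgraphs with the same support
preserves component counts.**
Let `G₁`, `G₂` be graphs on the same finite vertex set `V`, edge-coloured (by
`col₁`, `col₂`) with colours from the same set `C`.  Suppose that for each
colour `c`, the colour class of `c` in `G₁` and the colour class of `c` in `G₂`
are connected subgraphs spanning the same set of vertices (the support of the
colour class of `c` is the same in both graphs, and any two vertices of this
support are joined by a walk using only edges of colour `c`).  Then for every
set `S` of colours, deleting from `G₁` all edges with colour in `S` leaves the
same number of connected components (isolated vertices included) as deleting
from `G₂` all edges with colour in `S`. -/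
theorem deleteColours_card_connectedComponent_eq
    {V : Type*} [Fintype V] {C : Type*}
    (G₁ G₂ : SimpleGraph V) (col₁ col₂ : Sym2 V → C)
    (hsupp : ∀ c : C,
      {v : V | ∃ e ∈ G₁.edgeSet, col₁ e = c ∧ v ∈ e} =
        {v : V | ∃ e ∈ G₂.edgeSet, col₂ e = c ∧ v ∈ e})
    (hconn₁ : ∀ c : C, ∀ u v : V,
      (∃ e ∈ G₁.edgeSet, col₁ e = c ∧ u ∈ e) →
      (∃ e ∈ G₁.edgeSet, col₁ e = c ∧ v ∈ e) →
      (SimpleGraph.fromEdgeSet {e ∈ G₁.edgeSet | col₁ e = c}).Reachable u v)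
    (hconn₂ : ∀ c : C, ∀ u v : V,
      (∃ e ∈ G₂.edgeSet, col₂ e = c ∧ u ∈ e) →
      (∃ e ∈ G₂.edgeSet, col₂ e = c ∧ v ∈ e) →
      (SimpleGraph.fromEdgeSet {e ∈ G₂.edgeSet | col₂ e = c}).Reachable u v) :
    ∀ S : Set C,
      Nat.card (G₁.deleteEdges {e | col₁ e ∈ S}).ConnectedComponent =
        Nat.card (G₂.deleteEdges {e | col₂ e ∈ S}).ConnectedComponent := by
  intro S
  have hR : (G₁.deleteEdges {e | col₁ e ∈ S}).Reachable
      = (G₂.deleteEdges {e | col₂ e ∈ S}).Reachable := by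
    funext u v
    exact propext ⟨key G₁ G₂ col₁ col₂ hsupp hconn₂ S,
      key G₂ G₁ col₂ col₁ (fun c => (hsupp c).symm) hconn₁ S⟩
  show Nat.card (Quot (G₁.deleteEdges {e | col₁ e ∈ S}).Reachable)
      = Nat.card (Quot (G₂.deleteEdges {e | col₂ e ∈ S}).Reachable)
  rw [hR]
end

section
/- Every hypertree H can be shrunk to a tree on the same vertex set; that is, there is a bijection assigning to each hyperedge e of H an unordered pair of two distinct vertices of e such that these pairs form the edge set of a tree on the vertex set of H. -/
open Finset

namespace HypertreeShrink

variable {V : Type*} [Fintype V] [DecidableEq V] {ι : Type*} [Fintype ι] [DecidableEq ι]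

/-- number of sets in the family contained in `X` -/
def cnt (A : ι → Finset V) (X : Finset V) : ℕ :=
  (Finset.univ.filter (fun i => A i ⊆ X)).card

lemma shrink_step (A : ι → Finset V)
    (hA : ∀ X : Finset V, cnt A X ≤ X.card - 1)
    (i₀ : ι) (h3 : 3 ≤ (A i₀).card) :
    ∃ v ∈ A i₀, ∀ X : Finset V,
      cnt (Function.update A i₀ ((A i₀).erase v)) X ≤ X.card - 1 := by
  classical
  by_contra hbad
  push_neg at hbad
  -- from failure at `v`, extract a tight witness set
  have key : ∀ v ∈ A i₀, ∃ X : Finset V,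
      v ∉ X ∧ (A i₀).erase v ⊆ X ∧ cnt A X + 1 = X.card := by
    intro v hv
    obtain ⟨X, hX⟩ := hbad v hv
    set A' := Function.update A i₀ ((A i₀).erase v) with hA'
    set s' := Finset.univ.filter (fun i => A' i ⊆ X) with hs'
    set s := Finset.univ.filter (fun i => A i ⊆ X) with hs
    have hXlt : X.card - 1 < s'.card := hX
    have hcnts : cnt A X = s.card := rfl
    have hcnts' : cnt A' X = s'.card := rfl
    have herase : s'.erase i₀ = s.erase i₀ := by
      ext i
      simp only [Finset.mem_erase, hs', hs, Finset.mem_filter, Finset.mem_univ, true_and]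
      constructor
      · rintro ⟨hne, h⟩
        refine ⟨hne, ?_⟩
        rwa [hA', Function.update_of_ne hne] at h
      · rintro ⟨hne, h⟩
        refine ⟨hne, ?_⟩
        rwa [hA', Function.update_of_ne hne]
    have hi₀s' : i₀ ∈ s' := by
      by_contra h
      have : s' = s'.erase i₀ := (Finset.erase_eq_of_notMem h).symm
      have hsub2 : s' ⊆ s := by
        rw [this, herase]; exact Finset.erase_subset _ _
      have := Finset.card_le_card hsub2
      have := hA X
      omega
    have hesub : (A i₀).erase v ⊆ X := by
      have := (Finset.mem_filter.mp hi₀s').2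
      rwa [hA', Function.update_self] at this
    have hXne : 1 ≤ X.card := by
      have hc : ((A i₀).erase v).card ≤ X.card := Finset.card_le_card hesub
      have : ((A i₀).erase v).card = (A i₀).card - 1 := Finset.card_erase_of_mem hv
      omega
    have hi₀s : i₀ ∉ s := by
      intro h
      have hAX : A i₀ ⊆ X := (Finset.mem_filter.mp h).2
      -- then s' ⊆ s, contradiction with cardinalities
      have hsub2 : s' ⊆ s := by
        intro i hi
        by_cases hne : i = i₀
        · subst hne; exact h
        · have : i ∈ s'.erase i₀ := Finset.mem_erase.mpr ⟨hne, hi⟩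
          rw [herase] at this
          exact (Finset.mem_erase.mp this).2
      have := Finset.card_le_card hsub2
      have := hA X
      omega
    have hvX : v ∉ X := by
      intro hvX
      apply hi₀s
      simp only [hs, Finset.mem_filter, Finset.mem_univ, true_and]
      intro x hx
      by_cases hxv : x = v
      · subst hxv; exact hvX
      · exact hesub (Finset.mem_erase.mpr ⟨hxv, hx⟩)
    refine ⟨X, hvX, hesub, ?_⟩
    -- tightness
    have h1 : s'.card ≤ s.card + 1 := by
      have := Finset.card_erase_of_mem hi₀s'
      have h2 : (s.erase i₀).card ≤ s.card := Finset.card_le_card (Finset.erase_subset _ _)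
      rw [herase] at this
      omega
    have := hA X
    omega
  -- pick three distinct vertices of `A i₀`
  obtain ⟨v, w, u, hv, hw, hu, hvw, hvu, hwu⟩ := Finset.two_lt_card_iff.mp (show 2 < (A i₀).card by omega)
  obtain ⟨X, hvX, hvsub, hvt⟩ := key v hv
  obtain ⟨Y, hwY, hwsub, hwt⟩ := key w hw
  set s := Finset.univ.filter (fun i => A i ⊆ X) with hs
  set t := Finset.univ.filter (fun i => A i ⊆ Y) with ht
  have hsub1 : s ∪ t ⊆ Finset.univ.filter (fun i => A i ⊆ X ∪ Y) := by
    intro i hi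
    simp only [Finset.mem_union, hs, ht, Finset.mem_filter, Finset.mem_univ, true_and] at hi ⊢
    rcases hi with h | h
    · exact h.trans Finset.subset_union_left
    · exact h.trans Finset.subset_union_right
  have hi₀U : i₀ ∈ Finset.univ.filter (fun i => A i ⊆ X ∪ Y) := by
    simp only [Finset.mem_filter, Finset.mem_univ, true_and]
    intro x hx
    by_cases hxv : x = v
    · subst hxv
      exact Finset.mem_union_right _ (hwsub (Finset.mem_erase.mpr ⟨hvw, hx⟩))
    · exact Finset.mem_union_left _ (hvsub (Finset.mem_erase.mpr ⟨hxv, hx⟩))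
  have hi₀st : i₀ ∉ s ∪ t := by
    simp only [Finset.mem_union, hs, ht, Finset.mem_filter, Finset.mem_univ, true_and]
    rintro (h | h)
    · exact hvX (h hv)
    · exact hwY (h hw)
  have hcup : (s ∪ t).card + 1 ≤ cnt A (X ∪ Y) := by
    have hsub2 : insert i₀ (s ∪ t) ⊆ Finset.univ.filter (fun i => A i ⊆ X ∪ Y) := by
      intro i hi
      rcases Finset.mem_insert.mp hi with rfl | hi
      · exact hi₀U
      · exact hsub1 hi
    have := Finset.card_le_card hsub2
    rwa [Finset.card_insert_of_notMem hi₀st] at this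
  have hcap : (s ∩ t).card ≤ cnt A (X ∩ Y) := by
    apply Finset.card_le_card
    intro i hi
    simp only [Finset.mem_inter, hs, ht, Finset.mem_filter, Finset.mem_univ, true_and] at hi
    simp only [cnt, Finset.mem_filter, Finset.mem_univ, true_and]
    exact Finset.subset_inter hi.1 hi.2
  have hZne : u ∈ X ∩ Y := by
    exact Finset.mem_inter.mpr
      ⟨hvsub (Finset.mem_erase.mpr ⟨fun h => hvu h.symm, hu⟩),
       hwsub (Finset.mem_erase.mpr ⟨fun h => hwu h.symm, hu⟩)⟩
  have hZ1 : 1 ≤ (X ∩ Y).card := Finset.card_pos.mpr ⟨u, hZne⟩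
  have hU1 : 1 ≤ (X ∪ Y).card := by
    have := Finset.card_le_card (Finset.subset_union_left (s₂ := Y) (s₁ := X))
    omega
  have hAU := hA (X ∪ Y)
  have hAZ := hA (X ∩ Y)
  have hcards : (X ∪ Y).card + (X ∩ Y).card = X.card + Y.card :=
    Finset.card_union_add_card_inter X Y
  have hst : (s ∪ t).card + (s ∩ t).card = s.card + t.card :=
    Finset.card_union_add_card_inter s t
  have hvt' : s.card + 1 = X.card := hvt
  have hwt' : t.card + 1 = Y.card := hwt
  omega

lemma shrink_all (N : ℕ) : ∀ (A : ι → Finset V),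
    (∑ i, (A i).card) ≤ N →
    (∀ i, 2 ≤ (A i).card) →
    (∀ X : Finset V, cnt A X ≤ X.card - 1) →
    ∃ B : ι → Finset V, (∀ i, B i ⊆ A i) ∧ (∀ i, (B i).card = 2) ∧
      (∀ X : Finset V, cnt B X ≤ X.card - 1) := by
  induction N with
  | zero =>
    intro A hsum h2 hA
    refine ⟨A, fun i => subset_rfl, fun i => ?_, hA⟩
    have h1 : (A i).card ≤ ∑ j, (A j).card :=
      Finset.single_le_sum (f := fun j => (A j).card) (fun j _ => Nat.zero_le _)
        (Finset.mem_univ i)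
    have := h2 i
    omega
  | succ n ih =>
    intro A hsum h2 hA
    by_cases hex : ∃ i₀, 3 ≤ (A i₀).card
    · obtain ⟨i₀, h3⟩ := hex
      obtain ⟨v, hv, hA'⟩ := shrink_step A hA i₀ h3
      set A' := Function.update A i₀ ((A i₀).erase v) with hA'def
      have hsubA : ∀ i, A' i ⊆ A i := by
        intro i
        by_cases h : i = i₀
        · subst h; rw [hA'def, Function.update_self]; exact Finset.erase_subset _ _
        · rw [hA'def, Function.update_of_ne h]
      have h2' : ∀ i, 2 ≤ (A' i).card := by
        intro i
        by_cases h : i = i₀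
        · subst h
          rw [hA'def, Function.update_self, Finset.card_erase_of_mem hv]
          omega
        · rw [hA'def, Function.update_of_ne h]; exact h2 i
      have hsum' : ∑ i, (A' i).card ≤ n := by
        have h1 : ∑ i, (A' i).card =
            ((A i₀).erase v).card + ∑ i ∈ Finset.univ.erase i₀, (A i).card := by
          rw [← Finset.add_sum_erase _ (fun i => (A' i).card) (Finset.mem_univ i₀)]
          congr 1
          · rw [hA'def, Function.update_self]
          · apply Finset.sum_congr rfl
            intro i hi
            rw [hA'def, Function.update_of_ne (Finset.mem_erase.mp hi).1]
        have h2'' : ∑ i, (A i).card =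
            (A i₀).card + ∑ i ∈ Finset.univ.erase i₀, (A i).card :=
          (Finset.add_sum_erase _ _ (Finset.mem_univ i₀)).symm
        have h3' : ((A i₀).erase v).card = (A i₀).card - 1 := Finset.card_erase_of_mem hv
        omega
      obtain ⟨B, hBsub, hB2, hBc⟩ := ih A' hsum' h2' hA'
      exact ⟨B, fun i => (hBsub i).trans (hsubA i), hB2, hBc⟩
    · push_neg at hex
      refine ⟨A, fun i => subset_rfl, fun i => ?_, hA⟩
      have := h2 i
      have := hex i
      omega

lemma base_case [Nonempty V] (B : ι → Finset V) (hB2 : ∀ i, (B i).card = 2)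
    (hBc : ∀ X : Finset V, cnt B X ≤ X.card - 1)
    (hfull : Fintype.card ι = Fintype.card V - 1) :
    ∃ (T : SimpleGraph V) (τ : ι → Sym2 V),
      T.IsTree ∧ (∀ i, ¬ (τ i).IsDiag) ∧ (∀ i, ∀ x ∈ τ i, x ∈ B i) ∧
      Function.Injective τ ∧ T.edgeSet = Set.range τ := by
  classical
  choose a b hab hBeq using fun i => Finset.card_eq_two.mp (hB2 i)
  set τ : ι → Sym2 V := fun i => s(a i, b i) with hτ
  have hmem : ∀ i, ∀ x ∈ τ i, x ∈ B i := by
    intro i x hx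
    rw [hτ] at hx
    rw [Sym2.mem_iff] at hx
    rw [hBeq i]
    rcases hx with rfl | rfl
    · exact Finset.mem_insert_self _ _
    · exact Finset.mem_insert_of_mem (Finset.mem_singleton_self _)
  have hdiag : ∀ i, ¬ (τ i).IsDiag := by
    intro i
    simp [hτ, Sym2.mk_isDiag_iff, hab i]
  have hBpair : ∀ i j, τ i = τ j → B i = B j := by
    intro i j hij
    rw [hτ] at hij
    simp only [Sym2.eq_iff] at hij
    rw [hBeq i, hBeq j]
    rcases hij with ⟨h1, h2⟩ | ⟨h1, h2⟩
    · rw [h1, h2]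
    · rw [h1, h2, Finset.pair_comm]
  have hinj : Function.Injective τ := by
    intro i j hij
    by_contra hne
    have hBij := hBpair i j hij
    have hsub : {i, j} ⊆ Finset.univ.filter (fun k => B k ⊆ B i) := by
      intro k hk
      rcases Finset.mem_insert.mp hk with rfl | hk
      · simp
      · rw [Finset.mem_singleton] at hk
        subst hk
        simp [hBij]
    have hcard : ({i, j} : Finset ι).card = 2 := Finset.card_pair hne
    have h1 := Finset.card_le_card hsub
    have h2 := hBc (B i)
    rw [hB2 i] at h2
    rw [hcard] at h1
    have : cnt B (B i) = (Finset.univ.filter (fun k => B k ⊆ B i)).card := rfl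
    omega
  set T : SimpleGraph V := SimpleGraph.fromEdgeSet (Set.range τ) with hT
  have hedge : T.edgeSet = Set.range τ := by
    rw [hT, SimpleGraph.edgeSet_fromEdgeSet]
    ext z
    simp only [Set.mem_diff, Set.mem_setOf_eq, and_iff_left_iff_imp]
    rintro ⟨i, rfl⟩
    exact hdiag i
  have hadj : ∀ i, T.Adj (a i) (b i) := by
    intro i
    rw [hT, SimpleGraph.fromEdgeSet_adj]
    exact ⟨⟨i, rfl⟩, hab i⟩
  -- connectivity
  have hconn : T.Connected := by
    rw [SimpleGraph.connected_iff]
    refine ⟨fun x y => ?_, inferInstance⟩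
    by_contra hxy
    set X : Finset V := Finset.univ.filter (fun z => T.Reachable x z) with hX
    have hxX : x ∈ X := by
      simp only [hX, Finset.mem_filter, Finset.mem_univ, true_and]
      exact SimpleGraph.Reachable.refl x
    have hyX : y ∈ Xᶜ := by simp [hX, hxy]
    have hsplit : ∀ i, B i ⊆ X ∨ B i ⊆ Xᶜ := by
      intro i
      have hiff : a i ∈ X ↔ b i ∈ X := by
        simp only [hX, Finset.mem_filter, Finset.mem_univ, true_and]
        exact ⟨fun h => h.trans (hadj i).reachable,
               fun h => h.trans (hadj i).symm.reachable⟩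
      by_cases hA : a i ∈ X
      · left
        rw [hBeq i]
        intro z hz
        rcases Finset.mem_insert.mp hz with rfl | hz
        · exact hA
        · rw [Finset.mem_singleton] at hz; subst hz; exact hiff.mp hA
      · right
        rw [hBeq i]
        intro z hz
        rcases Finset.mem_insert.mp hz with rfl | hz
        · exact Finset.mem_compl.mpr hA
        · rw [Finset.mem_singleton] at hz; subst hz
          exact Finset.mem_compl.mpr (fun h => hA (hiff.mpr h))
    set s1 := Finset.univ.filter (fun i => B i ⊆ X) with hs1
    set s2 := Finset.univ.filter (fun i => B i ⊆ Xᶜ) with hs2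
    have hdisj : Disjoint s1 s2 := by
      rw [Finset.disjoint_left]
      intro i h1 h2
      simp only [hs1, hs2, Finset.mem_filter, Finset.mem_univ, true_and] at h1 h2
      have : a i ∈ X := h1 (by rw [hBeq i]; exact Finset.mem_insert_self _ _)
      have : a i ∈ Xᶜ := h2 (by rw [hBeq i]; exact Finset.mem_insert_self _ _)
      exact Finset.mem_compl.mp this ‹a i ∈ X›
    have hcover : s1 ∪ s2 = Finset.univ := by
      apply Finset.eq_univ_of_forall
      intro i
      rcases hsplit i with h | h
      · exact Finset.mem_union_left _ (by simp [hs1, h])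
      · exact Finset.mem_union_right _ (by simp [hs2, h])
    have hcards : s1.card + s2.card = Fintype.card ι := by
      rw [← Finset.card_union_of_disjoint hdisj, hcover, Finset.card_univ]
    have h1 := hBc X
    have h2 := hBc Xᶜ
    have hX1 : 1 ≤ X.card := Finset.card_pos.mpr ⟨x, hxX⟩
    have hX2 : 1 ≤ Xᶜ.card := Finset.card_pos.mpr ⟨y, hyX⟩
    have hcompl : X.card + Xᶜ.card = Fintype.card V := Finset.card_add_card_compl X
    have hs1c : cnt B X = s1.card := rfl
    have hs2c : cnt B Xᶜ = s2.card := rfl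
    have hV1 : 1 ≤ Fintype.card V := Fintype.card_pos
    omega
  -- acyclicity
  have hacyc : T.IsAcyclic := by
    intro v c hc
    set S : Finset V := c.support.tail.toFinset with hS
    have hlen3 := hc.three_le_length
    have hltail : c.support.tail.length = c.length := by
      have hl := c.length_support
      rw [c.support_eq_cons] at hl
      simp only [List.length_cons] at hl
      omega
    have htne : c.support.tail ≠ [] := by
      intro h
      rw [h] at hltail
      simp at hltail
      omega
    have h0 : c.support.getLast? = some v := by
      rw [List.getLast?_eq_getLast_of_ne_nil (by simp)]
      exact congrArg some c.getLast_support
    obtain ⟨x0, l0, hl0⟩ : ∃ x0 l0, c.support.tail = x0 :: l0 := by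
      cases h : c.support.tail with
      | nil => exact absurd h htne
      | cons x0 l0 => exact ⟨x0, l0, rfl⟩
    have hvtail : v ∈ c.support.tail := by
      rw [c.support_eq_cons, hl0, List.getLast?_cons_cons,
        List.getLast?_eq_getLast_of_ne_nil (List.cons_ne_nil x0 l0)] at h0
      have hv' : (x0 :: l0).getLast (List.cons_ne_nil x0 l0) = v := Option.some_inj.mp h0
      rw [hl0, ← hv']
      exact List.getLast_mem _
    have hsupp : ∀ z ∈ c.support, z ∈ S := by
      intro z hz
      rw [c.support_eq_cons] at hz
      rcases List.mem_cons.mp hz with rfl | hz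
      · exact List.mem_toFinset.mpr hvtail
      · exact List.mem_toFinset.mpr hz
    have hScard : S.card = c.length := by
      rw [hS, List.toFinset_card_of_nodup hc.support_nodup]
      exact hltail
    -- every edge of the cycle comes from some i with B i ⊆ S
    have hsurj : Set.SurjOn τ (Finset.univ.filter (fun i => B i ⊆ S) : Finset ι)
        (c.edges.toFinset : Set (Sym2 V)) := by
      intro e he
      simp only [Finset.coe_filter, Set.mem_setOf_eq, Set.mem_image]
      rw [Finset.mem_coe, List.mem_toFinset] at he
      have heE : e ∈ T.edgeSet := c.edges_subset_edgeSet he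
      rw [hedge] at heE
      obtain ⟨i, rfl⟩ := heE
      refine ⟨i, ⟨Finset.mem_univ i, ?_⟩, rfl⟩
      intro z hz
      rw [hBeq i] at hz
      rcases Finset.mem_insert.mp hz with rfl | hz
      · exact hsupp _ (c.fst_mem_support_of_mem_edges he)
      · rw [Finset.mem_singleton] at hz; subst hz
        exact hsupp _ (c.snd_mem_support_of_mem_edges he)
    have hedgecard : c.edges.toFinset.card = c.length := by
      rw [List.toFinset_card_of_nodup hc.edges_nodup, c.length_edges]
    have hle := Finset.card_le_card_of_surjOn τ hsurj
    have hcS := hBc S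
    have hcnt : cnt B S = (Finset.univ.filter (fun i => B i ⊆ S)).card := rfl
    have hS1 : 1 ≤ S.card := by omega
    omega
  exact ⟨T, τ, ⟨hconn, hacyc⟩, hdiag, hmem, hinj, hedge⟩

end HypertreeShrink

/-- **Theorem (Lovász): every hypertree can be shrunk to a tree.**
Let `H = (V, E)` be a hypertree.  Then there is a map `σ` assigning to each
hyperedge `e ∈ E` an unordered pair `σ e` of two distinct vertices of `e` which
is a bijection from `E` onto the edge set of a tree on the vertex set `V`. -/
theorem hypertree_shrinks_to_tree
    {V : Type*} [Fintype V] [DecidableEq V] [Nonempty V]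
    (E : Finset (Finset V))
    (hsimple : ∀ e ∈ E, 2 ≤ e.card)
    (hsub : ∀ X : Finset V, (E.filter (fun e => e ⊆ X)).card ≤ X.card - 1)
    (hfull : E.card = Fintype.card V - 1) :
    ∃ (T : SimpleGraph V) (σ : Finset V → Sym2 V),
      T.IsTree ∧
      (∀ e ∈ E, ¬ (σ e).IsDiag) ∧
      (∀ e ∈ E, ∀ v ∈ σ e, v ∈ e) ∧
      Set.BijOn σ ↑E T.edgeSet := by
  classical
  open HypertreeShrink in
  have hcnt : ∀ X : Finset V,
      cnt (fun i : {e // e ∈ E} => (i : Finset V)) X ≤ X.card - 1 := by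
    intro X
    have heq : cnt (fun i : {e // e ∈ E} => (i : Finset V)) X
        = (E.filter (fun e => e ⊆ X)).card := by
      unfold HypertreeShrink.cnt
      refine Finset.card_bij (fun i _ => (i : Finset V)) ?_ ?_ ?_
      · intro i hi
        simp only [Finset.mem_filter, Finset.mem_univ, true_and] at hi
        exact Finset.mem_filter.mpr ⟨i.2, hi⟩
      · intro i _ j _ hij
        exact Subtype.ext hij
      · intro e he
        rw [Finset.mem_filter] at he
        exact ⟨⟨e, he.1⟩, by simp [he.2], rfl⟩
    rw [heq]
    exact hsub X
  have h2' : ∀ i : {e // e ∈ E}, 2 ≤ (i : Finset V).card := fun i => hsimple i i.2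
  obtain ⟨B, hBsub, hB2, hBc⟩ :=
    HypertreeShrink.shrink_all (∑ i : {e // e ∈ E}, ((i : Finset V)).card) _ le_rfl h2' hcnt
  have hfull' : Fintype.card {e // e ∈ E} = Fintype.card V - 1 := by
    rw [Fintype.card_coe]; exact hfull
  obtain ⟨T, τ, hT, hdiag, hmem, hinj, hedge⟩ :=
    HypertreeShrink.base_case B hB2 hBc hfull'
  refine ⟨T, fun e => if h : e ∈ E then τ ⟨e, h⟩
      else s(Classical.arbitrary V, Classical.arbitrary V), hT, ?_, ?_, ?_, ?_, ?_⟩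
  · intro e he
    simp only [dif_pos he]
    exact hdiag _
  · intro e he v hv
    simp only [dif_pos he] at hv
    exact hBsub ⟨e, he⟩ (hmem _ _ hv)
  · intro e he
    simp only [Finset.mem_coe] at he
    simp only [dif_pos he, hedge]
    exact ⟨⟨e, he⟩, rfl⟩
  · intro e1 he1 e2 he2 h
    simp only [Finset.mem_coe] at he1 he2
    simp only [dif_pos he1, dif_pos he2] at h
    exact congrArg Subtype.val (hinj h)
  · intro z hz
    rw [hedge] at hz
    obtain ⟨i, rfl⟩ := hz
    refine ⟨(i : Finset V), i.2, ?_⟩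
    simp only [dif_pos i.2]
end
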